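/- arXiv:1604.04390 — 7 statements merged into one kernel-verified Lean document; each statement's English description precedes it below -/
import Mathlib

section
/- Let A and B be event structures. For every order-isomorphism φ : C(A) ≅ C(B) (with configurations ordered by inclusion) there is a unique isomorphism of event structures φ̂ : A ≅ B satisfying φ̂(x) = φ(x) for every configuration x ∈ C(A); moreover this assignment is a bijective correspondence between order-isomorphisms C(A) ≅ C(B) and isomorphisms of event structures A ≅ B. -/
/-- An event structure presented as raw data: a set of events, a causality
relation and a consistency predicate on (finite) sets of events. -/
structure ES where
  Evt : Type
  le : Evt → Evt → Prop
  Con : Set (Set Evt)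

namespace ES

/-- Strict causality. -/
def lt (E : ES) (a b : E.Evt) : Prop := E.le a b ∧ a ≠ b

/-- The axioms of event structures: `le` is a partial order, causes `[e]` are
finite, consistency is a nonempty collection of finite sets, closed under
subsets, containing all singletons, and closed under adding causal
dependencies. -/
def IsES (E : ES) : Prop :=
  (∀ e, E.le e e) ∧
  (∀ a b c, E.le a b → E.le b c → E.le a c) ∧
  (∀ a b, E.le a b → E.le b a → a = b) ∧
  (∀ e, {e' | E.le e' e}.Finite) ∧
  E.Con.Nonempty ∧
  (∀ X ∈ E.Con, X.Finite) ∧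
  (∀ e, ({e} : Set E.Evt) ∈ E.Con) ∧
  (∀ X ∈ E.Con, ∀ Y, Y ⊆ X → Y ∈ E.Con) ∧
  (∀ X ∈ E.Con, ∀ e ∈ X, ∀ e', E.le e' e → insert e' X ∈ E.Con)

/-- A (finite) configuration: a finite, consistent and down-closed set of events. -/
def Config (E : ES) (x : Set E.Evt) : Prop :=
  x.Finite ∧ (∀ Y, Y ⊆ x → Y.Finite → Y ∈ E.Con) ∧
  ∀ e ∈ x, ∀ e', E.le e' e → e' ∈ x

/-- Immediate causality `e ⇢ e'`. -/
def imc (E : ES) (a b : E.Evt) : Prop :=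
  E.lt a b ∧ ∀ c, E.le a c → E.le c b → c = a ∨ c = b

/-- Simple parallel composition of event structures. -/
def par (E F : ES) : ES where
  Evt := E.Evt ⊕ F.Evt
  le := fun p q =>
    match p, q with
    | Sum.inl a, Sum.inl b => E.le a b
    | Sum.inr a, Sum.inr b => F.le a b
    | _, _ => False
  Con := {X | Sum.inl ⁻¹' X ∈ E.Con ∧ Sum.inr ⁻¹' X ∈ F.Con}

/-- Projection (hiding): restrict an event structure to a subset `V` of events. -/
def proj (E : ES) (V : Set E.Evt) : ES where
  Evt := ↥V
  le := fun a b => E.le a.val b.val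
  Con := {X | Subtype.val '' X ∈ E.Con}

end ES

/-- A (total) map of event structures: preserves configurations and is
injective on each configuration. -/
def IsMap (E F : ES) (f : E.Evt → F.Evt) : Prop :=
  (∀ x, E.Config x → F.Config (f '' x)) ∧ ∀ x, E.Config x → Set.InjOn f x

/-- The poset of configurations of `E`, ordered by inclusion. -/
def ConfigPoset (E : ES) : Type := {x : Set E.Evt // E.Config x}

instance (E : ES) : PartialOrder (ConfigPoset E) :=
  Subtype.partialOrder _

/-- `f` is an isomorphism of event structures: a map of event structures with
a two-sided inverse map. -/
def IsESIso (A B : ES) (f : A.Evt → B.Evt) : Prop :=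
  IsMap A B f ∧ ∃ g : B.Evt → A.Evt, IsMap B A g ∧
    (∀ a, g (f a) = a) ∧ ∀ b, f (g b) = b

/-! An order-isomorphism `φ : C(A) ≅ C(B)` sends each prime configuration `[a]` to a prime
configuration `[b]`: the strict down-closure `[a)` is strictly below `[a]`, so some
`b ∈ φ[a] \ φ[a)`; then `φ⁻¹[b] ⊆ [a]` but `φ⁻¹[b] ⊄ [a)`, whence `a ∈ φ⁻¹[b]` and
`φ[a] = [b]`. Since primes are injective in their event and `e ∈ x ↔ [e] ⊆ x`, the event
map `a ↦ b` satisfies `b ∈ φ x ↔ a ∈ x`; the map of `φ⁻¹` is its inverse, so it is an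
isomorphism with image `φ x` on `x`. Configurations separate events, which gives uniqueness,
and with it the bijection with isomorphisms of event structures. -/

namespace ES

variable {E : ES}

/-- The down-closure `[e]`. -/
def causes (E : ES) (e : E.Evt) : Set E.Evt := {e' | E.le e' e}

/-- The strict down-closure `[e)`. -/
def strictCauses (E : ES) (e : E.Evt) : Set E.Evt := {e' | E.le e' e ∧ e' ≠ e}

namespace IsES

theorem refl (hE : E.IsES) (e : E.Evt) : E.le e e := hE.1 e

theorem trans (hE : E.IsES) {a b c : E.Evt} (hab : E.le a b) (hbc : E.le b c) : E.le a c :=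
  hE.2.1 a b c hab hbc

theorem antisymm (hE : E.IsES) {a b : E.Evt} (hab : E.le a b) (hba : E.le b a) : a = b :=
  hE.2.2.1 a b hab hba

theorem causes_finite (hE : E.IsES) (e : E.Evt) : (E.causes e).Finite := hE.2.2.2.1 e

theorem singleton_mem_con (hE : E.IsES) (e : E.Evt) : ({e} : Set E.Evt) ∈ E.Con :=
  hE.2.2.2.2.2.2.1 e

theorem mem_con_of_subset (hE : E.IsES) {X Y : Set E.Evt} (hX : X ∈ E.Con) (hYX : Y ⊆ X) :
    Y ∈ E.Con :=
  hE.2.2.2.2.2.2.2.1 X hX Y hYX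

theorem insert_mem_con (hE : E.IsES) {X : Set E.Evt} (hX : X ∈ E.Con) {e e' : E.Evt}
    (he : e ∈ X) (he' : E.le e' e) : insert e' X ∈ E.Con :=
  hE.2.2.2.2.2.2.2.2 X hX e he e' he'

theorem causes_mem_con (hE : E.IsES) (e : E.Evt) : E.causes e ∈ E.Con := by
  have key : insert e (E.causes e) ∈ E.Con := by
    refine Set.Finite.induction_on_subset (motive := fun t _ => insert e t ∈ E.Con) _
      (hE.causes_finite e) (by simpa using hE.singleton_mem_con e) ?_
    intro a t ha _ _ ht
    rw [Set.insert_comm]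
    exact hE.insert_mem_con ht (Set.mem_insert e t) ha
  exact hE.mem_con_of_subset key (Set.subset_insert e _)

theorem config_causes (hE : E.IsES) (e : E.Evt) : E.Config (E.causes e) :=
  ⟨hE.causes_finite e, fun _ hY _ => hE.mem_con_of_subset (hE.causes_mem_con e) hY,
    fun _ hc _ hc' => hE.trans hc' hc⟩

theorem config_strictCauses (hE : E.IsES) (e : E.Evt) : E.Config (E.strictCauses e) := by
  have hsub : E.strictCauses e ⊆ E.causes e := fun _ h => h.1
  refine ⟨(hE.causes_finite e).subset hsub,
    fun _ hY _ => hE.mem_con_of_subset (hE.causes_mem_con e) (hY.trans hsub), ?_⟩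
  rintro c ⟨hce, hne⟩ c' hc'c
  exact ⟨hE.trans hc'c hce, fun h => hne (hE.antisymm hce (h ▸ hc'c))⟩

end IsES

end ES

theorem IsESIso.injective {A B : ES} {f : A.Evt → B.Evt} (hf : IsESIso A B f) :
    Function.Injective f := by
  obtain ⟨g, -, hgf, -⟩ := hf.2
  exact Function.LeftInverse.injective hgf

namespace ConfigPoset

section Prime

variable {E : ES}

def prime (hE : E.IsES) (e : E.Evt) : ConfigPoset E := ⟨E.causes e, hE.config_causes e⟩

theorem prime_le_iff (hE : E.IsES) {e : E.Evt} {x : ConfigPoset E} :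
    prime hE e ≤ x ↔ e ∈ x.val :=
  ⟨fun h => h (hE.refl e), fun he _ hc => x.2.2.2 e he _ hc⟩

theorem prime_injective (hE : E.IsES) : Function.Injective (prime hE) := fun _ _ h =>
  hE.antisymm ((prime_le_iff hE).1 h.le) ((prime_le_iff hE).1 h.ge)

theorem eq_of_forall_mem_iff (hE : E.IsES) {e e' : E.Evt}
    (h : ∀ x : ConfigPoset E, e ∈ x.val ↔ e' ∈ x.val) : e = e' :=
  prime_injective hE <| le_antisymm
    ((prime_le_iff hE).2 ((h _).2 (hE.refl e'))) ((prime_le_iff hE).2 ((h _).1 (hE.refl e)))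

end Prime

section EventMap

variable {A B : ES} (hA : A.IsES) (hB : B.IsES) (φ : ConfigPoset A ≃o ConfigPoset B)

theorem exists_map_prime_eq_prime (a : A.Evt) : ∃ b, φ (prime hA a) = prime hB b := by
  let below : ConfigPoset A := ⟨A.strictCauses a, hA.config_strictCauses a⟩
  have hlt : below < prime hA a := lt_of_le_of_ne (fun _ h => h.1) fun h =>
    (show a ∈ below.val from h ▸ hA.refl a).2 rfl
  obtain ⟨b, hb, hb_below⟩ := Set.not_subset.1 (φ.lt_iff_lt.2 hlt).not_ge
  refine ⟨b, le_antisymm ?_ ((prime_le_iff hB).2 hb)⟩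
  rw [← φ.le_symm_apply, prime_le_iff hA]
  by_contra ha
  have hle : φ.symm (prime hB b) ≤ prime hA a := φ.symm_apply_le.2 ((prime_le_iff hB).2 hb)
  have hle_below : φ.symm (prime hB b) ≤ below := fun c hc => ⟨hle hc, fun h => ha (h ▸ hc)⟩
  exact hb_below ((prime_le_iff hB).1 (φ.symm_apply_le.1 hle_below))

noncomputable def eventMap (a : A.Evt) : B.Evt :=
  (exists_map_prime_eq_prime hA hB φ a).choose

theorem map_prime (a : A.Evt) : φ (prime hA a) = prime hB (eventMap hA hB φ a) :=
  (exists_map_prime_eq_prime hA hB φ a).choose_spec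

theorem eventMap_mem_iff {a : A.Evt} {x : ConfigPoset A} :
    eventMap hA hB φ a ∈ (φ x).val ↔ a ∈ x.val := by
  rw [← prime_le_iff hB, ← map_prime, φ.le_iff_le, prime_le_iff hA]

theorem eventMap_symm_eventMap (a : A.Evt) :
    eventMap hB hA φ.symm (eventMap hA hB φ a) = a :=
  prime_injective hA (by rw [← map_prime hB hA φ.symm, ← map_prime hA hB φ, φ.symm_apply_apply])

theorem eventMap_eventMap_symm (b : B.Evt) :
    eventMap hA hB φ (eventMap hB hA φ.symm b) = b := by
  simpa using eventMap_symm_eventMap hB hA φ.symm b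

theorem image_eventMap (x : ConfigPoset A) : eventMap hA hB φ '' x.val = (φ x).val := by
  ext b
  constructor
  · rintro ⟨a, ha, rfl⟩
    exact (eventMap_mem_iff hA hB φ).2 ha
  · intro hb
    refine ⟨eventMap hB hA φ.symm b, ?_, eventMap_eventMap_symm hA hB φ b⟩
    rwa [← eventMap_mem_iff hA hB φ, eventMap_eventMap_symm]

theorem isMap_eventMap : IsMap A B (eventMap hA hB φ) :=
  ⟨fun x hx => image_eventMap hA hB φ ⟨x, hx⟩ ▸ (φ ⟨x, hx⟩).2,
    fun _ _ => (Function.LeftInverse.injective (eventMap_symm_eventMap hA hB φ)).injOn⟩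

theorem isESIso_eventMap : IsESIso A B (eventMap hA hB φ) :=
  ⟨isMap_eventMap hA hB φ, eventMap hB hA φ.symm, isMap_eventMap hB hA φ.symm,
    eventMap_symm_eventMap hA hB φ, eventMap_eventMap_symm hA hB φ⟩

theorem eq_eventMap {f : A.Evt → B.Evt} (hf : Function.Injective f)
    (himage : ∀ x : ConfigPoset A, f '' x.val = (φ x).val) : f = eventMap hA hB φ := by
  funext a
  refine eq_of_forall_mem_iff hB fun y => ?_
  rw [← φ.apply_symm_apply y, eventMap_mem_iff, ← himage, hf.mem_set_image]

noncomputable def eventIso : {f : A.Evt → B.Evt // IsESIso A B f} :=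
  ⟨eventMap hA hB φ, isESIso_eventMap hA hB φ⟩

end EventMap

def orderIsoOfInverse {A B : ES} {f : A.Evt → B.Evt} {g : B.Evt → A.Evt} (hf : IsMap A B f)
    (hg : IsMap B A g) (hgf : Function.LeftInverse g f) (hfg : Function.RightInverse g f) :
    ConfigPoset A ≃o ConfigPoset B where
  toFun x := ⟨f '' x.val, hf.1 _ x.2⟩
  invFun y := ⟨g '' y.val, hg.1 _ y.2⟩
  left_inv x := Subtype.ext (hgf.image_image x.val)
  right_inv y := Subtype.ext (hfg.image_image y.val)
  map_rel_iff' := Set.image_subset_image_iff hgf.injective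

variable {A B : ES} (hA : A.IsES) (hB : B.IsES)

theorem eventIso_injective : Function.Injective (eventIso hA hB) := fun φ ψ h =>
  OrderIso.ext <| funext fun x => Subtype.ext <| by
    rw [← image_eventMap hA hB φ, ← image_eventMap hA hB ψ]
    exact congrArg (· '' x.val) (congrArg Subtype.val h)

theorem eventIso_surjective : Function.Surjective (eventIso hA hB) := by
  rintro ⟨f, hf⟩
  obtain ⟨g, hg, hgf, hfg⟩ := hf.2
  exact ⟨orderIsoOfInverse hf.1 hg hgf hfg,
    Subtype.ext (eq_eventMap hA hB _ hf.injective fun _ => rfl).symm⟩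

end ConfigPoset

/-- every order-isomorphism `C(A) ≅ C(B)` lifts to a unique
isomorphism of event structures acting accordingly on configurations, and this
is a bijective correspondence between order-isomorphisms `C(A) ≅ C(B)` and
isomorphisms of event structures `A ≅ B`. -/
theorem order_iso_of_configs_lifts_uniquely
    (A B : ES) (hA : A.IsES) (hB : B.IsES) :
    (∀ φ : ConfigPoset A ≃o ConfigPoset B,
      ∃! f : {f : A.Evt → B.Evt // IsESIso A B f},
        ∀ x : ConfigPoset A, f.val '' x.val = (φ x).val) ∧
    ∃ e : (ConfigPoset A ≃o ConfigPoset B) ≃ {f : A.Evt → B.Evt // IsESIso A B f},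
      ∀ (φ : ConfigPoset A ≃o ConfigPoset B) (x : ConfigPoset A),
        (e φ).val '' x.val = (φ x).val := by
  open ConfigPoset in
  exact ⟨fun φ => ⟨eventIso hA hB φ, image_eventMap hA hB φ,
      fun f hf => Subtype.ext (eq_eventMap hA hB φ f.2.injective hf)⟩,
    Equiv.ofBijective (eventIso hA hB) ⟨eventIso_injective hA hB, eventIso_surjective hA hB⟩,
    image_eventMap hA hB⟩
end

section
/- Let φ : q ≃ q' be a secured bijection between finite partial orders q and q'. If (a, b) is immediately below (a', b') in the induced partial order on the graph of φ (i.e. (a,b) < (a',b') with nothing strictly between), then either a is immediately below a' in q, or b is immediately below b' in q'. -/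
/-- The relation `◁` induced on (the graph of) a bijection `φ : q ≃ q'`
between partial orders, transported to `q`: `a ◁ a'` (that is,
`(a, φ a) ◁ (a', φ a')`) iff `a <_q a'` or `φ a <_{q'} φ a'`. -/
def secRel {α β : Type} [PartialOrder α] [PartialOrder β] (φ : α ≃ β) :
    α → α → Prop :=
  fun a a' => a < a' ∨ φ a < φ a'

/-- `φ` is a secured bijection: the reflexive-transitive closure of `◁` on the
graph of `φ` is antisymmetric, hence a partial order. -/
def Secured {α β : Type} [PartialOrder α] [PartialOrder β] (φ : α ≃ β) : Prop :=
  ∀ a a', Relation.ReflTransGen (secRel φ) a a' →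
    Relation.ReflTransGen (secRel φ) a' a → a = a'

/-- `a` is immediately below `a'` for the relation `le`: `a` is strictly below
`a'` and anything between them is one of the two. -/
def ImmBelow {α : Type} (le : α → α → Prop) (a a' : α) : Prop :=
  le a a' ∧ a ≠ a' ∧ ∀ c, le a c → le c a' → c = a ∨ c = a'

/-- in a secured bijection `φ` between finite partial orders, if
`(a, φ a)` is immediately below `(a', φ a')` in the induced partial order on
the graph of `φ`, then `a ⇢ a'` in `q` or `φ a ⇢ φ a'` in `q'`. -/
theorem secured_bijection_immediate_causality
    {α β : Type} [PartialOrder α] [PartialOrder β] [Fintype α] [Fintype β]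
    (φ : α ≃ β) (hsec : Secured φ) (a a' : α)
    (himm : ImmBelow (Relation.ReflTransGen (secRel φ)) a a') :
    ImmBelow (· ≤ · : α → α → Prop) a a' ∨
    ImmBelow (· ≤ · : β → β → Prop) (φ a) (φ a') := by
  obtain ⟨hle, hne, hbtw⟩ := himm
  -- extract a first step: secRel φ a a'
  have hstep : secRel φ a a' := by
    rcases (Relation.ReflTransGen.cases_head hle) with h | ⟨c, hac, hca'⟩
    · exact absurd h hne
    · rcases hbtw c (Relation.ReflTransGen.single hac) hca' with rfl | rfl
      · rcases hac with h | h
        · exact absurd rfl h.ne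
        · exact absurd rfl h.ne
      · exact hac
  have toRTG : ∀ x y : α, x ≤ y → Relation.ReflTransGen (secRel φ) x y := by
    intro x y hxy
    rcases eq_or_lt_of_le hxy with rfl | h
    · exact Relation.ReflTransGen.refl
    · exact Relation.ReflTransGen.single (Or.inl h)
  have toRTG' : ∀ x y : α, φ x ≤ φ y → Relation.ReflTransGen (secRel φ) x y := by
    intro x y hxy
    rcases eq_or_lt_of_le hxy with h | h
    · exact (φ.injective h) ▸ Relation.ReflTransGen.refl
    · exact Relation.ReflTransGen.single (Or.inr h)
  rcases hstep with h | h
  · left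
    refine ⟨h.le, hne, fun c hac hca' => ?_⟩
    exact hbtw c (toRTG a c hac) (toRTG c a' hca')
  · right
    refine ⟨h.le, h.ne, fun b hab hba' => ?_⟩
    have h1 : Relation.ReflTransGen (secRel φ) a (φ.symm b) := by
      apply toRTG' ; rwa [φ.apply_symm_apply]
    have h2 : Relation.ReflTransGen (secRel φ) (φ.symm b) a' := by
      apply toRTG' ; rwa [φ.apply_symm_apply]
    rcases hbtw _ h1 h2 with hc | hc
    · left; rw [← φ.apply_symm_apply b, hc]
    · right; rw [← φ.apply_symm_apply b, hc]
end

section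
/- Let σ : S → A and τ : T → A be maps of event structures, and S ∧ T their interaction. For each configuration x ∈ C(S ∧ T), the union φ_x = ∪x of the graphs of the elements of x is (the graph of) a secured bijection in SB(σ, τ), the map (s,t) ↦ [(s,t)]_{φ_x} (down-closure of (s,t) in the induced order on φ_x) is an order-isomorphism φ_x ≅ x, and x ↦ φ_x defines an order-isomorphism C(S ∧ T) ≅ SB(σ, τ). -/
/-- The relation `◁` generating the order on the graph `G` of a bijection:
`p ◁ q` when both are in `G` and `p.1 <_S q.1` or `p.2 <_T q.2`. -/
def gRel (S T : ES) (G : Set (S.Evt × T.Evt)) :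
    (S.Evt × T.Evt) → (S.Evt × T.Evt) → Prop :=
  fun p q => p ∈ G ∧ q ∈ G ∧ (S.lt p.1 q.1 ∨ T.lt p.2 q.2)

/-- The graph `G` is secured: the reflexive-transitive closure of `◁` on `G`
is antisymmetric (hence a partial order). -/
def SecuredOn (S T : ES) (G : Set (S.Evt × T.Evt)) : Prop :=
  ∀ p q, Relation.ReflTransGen (gRel S T G) p q →
    Relation.ReflTransGen (gRel S T G) q p → p = q

/-- `G` is (the graph of) a secured bijection `φ : x ≃ σ x = τ y ≃ y` between
configurations `x ∈ C(S)` and `y ∈ C(T)`, an element of `SB(σ, τ)`. -/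
def IsSecBij (S T A : ES) (σ : S.Evt → A.Evt) (τ : T.Evt → A.Evt)
    (G : Set (S.Evt × T.Evt)) : Prop :=
  S.Config (Prod.fst '' G) ∧ T.Config (Prod.snd '' G) ∧
  (∀ p ∈ G, σ p.1 = τ p.2) ∧
  (∀ s ∈ Prod.fst '' G, ∀ t ∈ Prod.snd '' G, σ s = τ t → (s, t) ∈ G) ∧
  σ '' (Prod.fst '' G) = τ '' (Prod.snd '' G) ∧
  SecuredOn S T G

/-- `G` has a top (greatest) element for the induced order. -/
def IsPrime (S T : ES) (G : Set (S.Evt × T.Evt)) : Prop :=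
  ∃ p ∈ G, ∀ q ∈ G, Relation.ReflTransGen (gRel S T G) q p

/-- The interaction `S ∧ T` of `σ : S → A` and `τ : T → A`: events are the
prime secured bijections, causality is inclusion of graphs, and a finite set
of events is consistent when the union of their graphs is a secured bijection. -/
def Interaction (S T A : ES) (σ : S.Evt → A.Evt) (τ : T.Evt → A.Evt) : ES where
  Evt := {G : Set (S.Evt × T.Evt) // IsSecBij S T A σ τ G ∧ IsPrime S T G}
  le := fun G G' => G.val ⊆ G'.val
  Con := {X | X.Finite ∧ IsSecBij S T A σ τ (⋃ G ∈ X, G.val)}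

/-- The poset of configurations of the interaction `S ∧ T`, ordered by
inclusion. -/
def InterConfigPoset (S T A : ES) (σ : S.Evt → A.Evt) (τ : T.Evt → A.Evt) : Type :=
  {x : Set (Interaction S T A σ τ).Evt // (Interaction S T A σ τ).Config x}

instance (S T A : ES) (σ : S.Evt → A.Evt) (τ : T.Evt → A.Evt) :
    PartialOrder (InterConfigPoset S T A σ τ) := Subtype.partialOrder _

/-- The poset `SB(σ, τ)` of secured bijections, ordered by inclusion of
graphs. -/
def SBPoset (S T A : ES) (σ : S.Evt → A.Evt) (τ : T.Evt → A.Evt) : Type :=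
  {G : Set (S.Evt × T.Evt) // IsSecBij S T A σ τ G}

instance (S T A : ES) (σ : S.Evt → A.Evt) (τ : T.Evt → A.Evt) :
    PartialOrder (SBPoset S T A σ τ) := Subtype.partialOrder _

/-! The events of `S ∧ T` below a configuration `x` are exactly the down-closures
`[p]` of the pairs `p ∈ φ_x`: a prime secured bijection inside `φ_x` is down-closed
in `φ_x` (local injectivity of `σ` and `τ` forces every pair it needs to be the
one already in `φ_x`), hence equals the down-closure of its top. Conversely every
down-closed part of a secured bijection is again one. So `x` is recovered from
`φ_x` as the set of prime secured bijections below it, and any secured bijection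
`H` arises this way from the configuration `{G | G ⊆ H}`. -/

lemma ES.Config.of_subset_of_downClosed {E : ES} {x y : Set E.Evt} (hx : E.Config x)
    (hyx : y ⊆ x) (hy : ∀ e ∈ y, ∀ e', E.le e' e → e' ∈ y) : E.Config y :=
  ⟨hx.1.subset hyx, fun Y hY hYf => hx.2.1 Y (hY.trans hyx) hYf, hy⟩

lemma Set.image_fst_eq_image_snd {α β γ : Type*} {f : α → γ} {g : β → γ}
    {D : Set (α × β)} (h : ∀ p ∈ D, f p.1 = g p.2) :
    f '' (Prod.fst '' D) = g '' (Prod.snd '' D) := by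
  simp only [Set.image_image]
  exact Set.image_congr h

section SecuredBijections

variable {S T A : ES} {σ : S.Evt → A.Evt} {τ : T.Evt → A.Evt}

lemma gRel_mono {G U : Set (S.Evt × T.Evt)} (h : G ⊆ U) {p q : S.Evt × T.Evt}
    (hpq : gRel S T G p q) : gRel S T U p q :=
  ⟨h hpq.1, h hpq.2.1, hpq.2.2⟩

lemma reflTransGen_gRel_mono {G U : Set (S.Evt × T.Evt)} (h : G ⊆ U)
    {p q : S.Evt × T.Evt} (hpq : Relation.ReflTransGen (gRel S T G) p q) :
    Relation.ReflTransGen (gRel S T U) p q :=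
  Relation.ReflTransGen.mono (fun _ _ => gRel_mono h) _ _ hpq

lemma SecuredOn.mono {G U : Set (S.Evt × T.Evt)} (hU : SecuredOn S T U) (h : G ⊆ U) :
    SecuredOn S T G :=
  fun p q hpq hqp => hU p q (reflTransGen_gRel_mono h hpq) (reflTransGen_gRel_mono h hqp)

namespace IsSecBij

lemma snd_eq_of_mem (hτ : IsMap T A τ) {U : Set (S.Evt × T.Evt)}
    (hU : IsSecBij S T A σ τ U) {s : S.Evt} {t t' : T.Evt}
    (h : (s, t) ∈ U) (h' : (s, t') ∈ U) : t = t' :=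
  hτ.2 _ hU.2.1 ⟨_, h, rfl⟩ ⟨_, h', rfl⟩ ((hU.2.2.1 _ h).symm.trans (hU.2.2.1 _ h'))

lemma fst_eq_of_mem (hσ : IsMap S A σ) {U : Set (S.Evt × T.Evt)}
    (hU : IsSecBij S T A σ τ U) {s s' : S.Evt} {t : T.Evt}
    (h : (s, t) ∈ U) (h' : (s', t) ∈ U) : s = s' :=
  hσ.2 _ hU.1 ⟨_, h, rfl⟩ ⟨_, h', rfl⟩ ((hU.2.2.1 _ h).trans (hU.2.2.1 _ h').symm)

lemma finite (hτ : IsMap T A τ) {U : Set (S.Evt × T.Evt)}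
    (hU : IsSecBij S T A σ τ U) : U.Finite := by
  refine Set.Finite.of_finite_image hU.1.1 ?_
  rintro ⟨s, t⟩ h ⟨s', t'⟩ h' (rfl : s = s')
  rw [hU.snd_eq_of_mem hτ h h']

end IsSecBij

def DownClosedIn (U D : Set (S.Evt × T.Evt)) : Prop :=
  ∀ ⦃q p⦄, p ∈ D → gRel S T U q p → q ∈ D

namespace DownClosedIn

variable {U D : Set (S.Evt × T.Evt)}

lemma reflTransGen (hD : DownClosedIn U D) {p q : S.Evt × T.Evt} (hp : p ∈ D)
    (h : Relation.ReflTransGen (gRel S T U) q p) :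
    q ∈ D ∧ Relation.ReflTransGen (gRel S T D) q p := by
  induction h using Relation.ReflTransGen.head_induction_on with
  | refl => exact ⟨hp, .refl⟩
  | head hstep _ ih =>
    obtain ⟨hc, hcp⟩ := ih
    exact ⟨hD hc hstep, .head ⟨hD hc hstep, hc, hstep.2.2⟩ hcp⟩

lemma fst_downClosed (hU : S.Config (Prod.fst '' U)) (hDU : D ⊆ U)
    (hD : DownClosedIn U D) :
    ∀ s ∈ Prod.fst '' D, ∀ s', S.le s' s → s' ∈ Prod.fst '' D := by
  rintro _ ⟨⟨s, t⟩, hst, rfl⟩ s' hle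
  by_cases he : s' = s
  · exact he ▸ ⟨_, hst, rfl⟩
  obtain ⟨⟨_, t'⟩, hst', rfl⟩ := hU.2.2 s ⟨_, hDU hst, rfl⟩ s' hle
  exact ⟨_, hD hst ⟨hst', hDU hst, .inl ⟨hle, he⟩⟩, rfl⟩

lemma snd_downClosed (hU : T.Config (Prod.snd '' U)) (hDU : D ⊆ U)
    (hD : DownClosedIn U D) :
    ∀ t ∈ Prod.snd '' D, ∀ t', T.le t' t → t' ∈ Prod.snd '' D := by
  rintro _ ⟨⟨s, t⟩, hst, rfl⟩ t' hle
  by_cases he : t' = t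
  · exact he ▸ ⟨_, hst, rfl⟩
  obtain ⟨⟨s', _⟩, hst', rfl⟩ := hU.2.2 t ⟨_, hDU hst, rfl⟩ t' hle
  exact ⟨_, hD hst ⟨hst', hDU hst, .inr ⟨hle, he⟩⟩, rfl⟩

lemma isSecBij (hτ : IsMap T A τ) (hU : IsSecBij S T A σ τ U) (hDU : D ⊆ U)
    (hD : DownClosedIn U D) : IsSecBij S T A σ τ D := by
  have hmatch : ∀ p ∈ D, σ p.1 = τ p.2 := fun p hp => hU.2.2.1 p (hDU hp)
  refine ⟨hU.1.of_subset_of_downClosed (Set.image_mono hDU) (fst_downClosed hU.1 hDU hD),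
    hU.2.1.of_subset_of_downClosed (Set.image_mono hDU) (snd_downClosed hU.2.1 hDU hD),
    hmatch, ?_, Set.image_fst_eq_image_snd hmatch, hU.2.2.2.2.2.mono hDU⟩
  rintro _ ⟨⟨s, t⟩, hst, rfl⟩ _ ⟨⟨s', t'⟩, hst', rfl⟩ hστ
  have hcross : (s, t') ∈ U := hU.2.2.2.1 s ⟨_, hDU hst, rfl⟩ t' ⟨_, hDU hst', rfl⟩ hστ
  rwa [← hU.snd_eq_of_mem hτ (hDU hst) hcross]

end DownClosedIn

/-- A secured bijection inside a secured bijection `U` is down-closed in `U`: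
a cause of one of its pairs must be matched, by local injectivity, with the
partner it has in `U`. -/
lemma IsSecBij.downClosedIn_of_subset (hσ : IsMap S A σ) (hτ : IsMap T A τ)
    {U G : Set (S.Evt × T.Evt)} (hU : IsSecBij S T A σ τ U)
    (hG : IsSecBij S T A σ τ G) (hGU : G ⊆ U) : DownClosedIn U G := by
  rintro ⟨s', t'⟩ ⟨s, t⟩ hst ⟨hst', -, hlt | hlt⟩
  · obtain ⟨⟨_, t''⟩, h, rfl⟩ := hG.1.2.2 s ⟨_, hst, rfl⟩ s' hlt.1
    rwa [← hU.snd_eq_of_mem hτ (hGU h) hst']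
  · obtain ⟨⟨s'', _⟩, h, rfl⟩ := hG.2.1.2.2 t ⟨_, hst, rfl⟩ t' hlt.1
    rwa [← hU.fst_eq_of_mem hσ (hGU h) hst']

def gDownset (S T : ES) (U : Set (S.Evt × T.Evt)) (p : S.Evt × T.Evt) :
    Set (S.Evt × T.Evt) :=
  {q | q ∈ U ∧ Relation.ReflTransGen (gRel S T U) q p}

section gDownset

variable {U : Set (S.Evt × T.Evt)} {p q : S.Evt × T.Evt}

lemma gDownset_subset : gDownset S T U p ⊆ U := fun _ hq => hq.1

lemma mem_gDownset_self (hp : p ∈ U) : p ∈ gDownset S T U p := ⟨hp, .refl⟩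

lemma downClosedIn_gDownset : DownClosedIn U (gDownset S T U p) :=
  fun _ _ hr hqr => ⟨hqr.1, .head hqr hr.2⟩

lemma isPrime_gDownset (hp : p ∈ U) : IsPrime S T (gDownset S T U p) :=
  ⟨p, mem_gDownset_self hp, fun _ hq =>
    (downClosedIn_gDownset.reflTransGen (mem_gDownset_self hp) hq.2).2⟩

lemma gDownset_subset_gDownset_iff (hp : p ∈ U) :
    gDownset S T U p ⊆ gDownset S T U q ↔ Relation.ReflTransGen (gRel S T U) p q :=
  ⟨fun h => (h (mem_gDownset_self hp)).2, fun h _ hr => ⟨hr.1, hr.2.trans h⟩⟩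

lemma isSecBij_gDownset (hτ : IsMap T A τ) (hU : IsSecBij S T A σ τ U) :
    IsSecBij S T A σ τ (gDownset S T U p) :=
  downClosedIn_gDownset.isSecBij hτ hU gDownset_subset

lemma IsSecBij.eq_gDownset_of_isTop (hσ : IsMap S A σ) (hτ : IsMap T A τ)
    {G : Set (S.Evt × T.Evt)} (hU : IsSecBij S T A σ τ U) (hG : IsSecBij S T A σ τ G)
    (hGU : G ⊆ U) (hp : p ∈ G) (htop : ∀ q ∈ G, Relation.ReflTransGen (gRel S T G) q p) :
    G = gDownset S T U p :=
  Set.Subset.antisymm (fun q hq => ⟨hGU hq, reflTransGen_gRel_mono hGU (htop q hq)⟩)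
    fun _ hq => ((hU.downClosedIn_of_subset hσ hτ hG hGU).reflTransGen hp hq.2).1

end gDownset

end SecuredBijections

namespace Interaction

variable {S T A : ES} {σ : S.Evt → A.Evt} {τ : T.Evt → A.Evt}

def gDownsetEvt (hτ : IsMap T A τ) {U : Set (S.Evt × T.Evt)} (hU : IsSecBij S T A σ τ U)
    {p : S.Evt × T.Evt} (hp : p ∈ U) : (Interaction S T A σ τ).Evt :=
  ⟨gDownset S T U p, isSecBij_gDownset hτ hU, isPrime_gDownset hp⟩

lemma isSecBij_biUnion {x : Set (Interaction S T A σ τ).Evt}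
    (hx : (Interaction S T A σ τ).Config x) : IsSecBij S T A σ τ (⋃ G ∈ x, G.val) :=
  (hx.2.1 x subset_rfl hx.1).2

lemma exists_eq_gDownset (hσ : IsMap S A σ) (hτ : IsMap T A τ)
    {U : Set (S.Evt × T.Evt)} (hU : IsSecBij S T A σ τ U)
    (G : (Interaction S T A σ τ).Evt) (hGU : G.val ⊆ U) :
    ∃ p ∈ G.val, G.val = gDownset S T U p := by
  obtain ⟨p, hp, htop⟩ := G.2.2
  exact ⟨p, hp, hU.eq_gDownset_of_isTop hσ hτ G.2.1 hGU hp htop⟩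

/-- Every event whose graph lies in `φ_x` belongs to `x`: it is `[p]_{φ_x}` for its
top `p`, and `[p]_{φ_x}` lies inside any event of `x` containing `p`. -/
lemma mem_of_subset_biUnion (hσ : IsMap S A σ) (hτ : IsMap T A τ)
    {x : Set (Interaction S T A σ τ).Evt} (hx : (Interaction S T A σ τ).Config x)
    {G : (Interaction S T A σ τ).Evt} (hGx : G.val ⊆ ⋃ G ∈ x, G.val) : G ∈ x := by
  have hU := isSecBij_biUnion hx
  obtain ⟨p, hp, hG⟩ := exists_eq_gDownset hσ hτ hU G hGx
  obtain ⟨G₀, hG₀x, hpG₀⟩ := Set.mem_iUnion₂.mp (hGx hp)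
  have hG₀ : DownClosedIn (⋃ G ∈ x, G.val) G₀.val :=
    hU.downClosedIn_of_subset hσ hτ G₀.2.1 (Set.subset_biUnion_of_mem hG₀x)
  refine hx.2.2 G₀ hG₀x G (?_ : G.val ⊆ G₀.val)
  rw [hG]
  exact fun _ hq => (hG₀.reflTransGen hpG₀ hq.2).1

lemma biUnion_subset_biUnion_iff (hσ : IsMap S A σ) (hτ : IsMap T A τ)
    {x y : Set (Interaction S T A σ τ).Evt} (hy : (Interaction S T A σ τ).Config y) :
    (⋃ G ∈ x, G.val) ⊆ (⋃ G ∈ y, G.val) ↔ x ⊆ y :=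
  ⟨fun h _ hG => mem_of_subset_biUnion hσ hτ hy ((Set.subset_biUnion_of_mem hG).trans h),
    fun h => Set.biUnion_subset_biUnion_left h⟩

lemma config_setOf_subset (hσ : IsMap S A σ) (hτ : IsMap T A τ)
    {H : Set (S.Evt × T.Evt)} (hH : IsSecBij S T A σ τ H) :
    (Interaction S T A σ τ).Config {G | G.val ⊆ H} := by
  refine ⟨?_, fun Y hY hYf => ⟨hYf, ?_⟩, fun G hG G' hle => hle.trans hG⟩
  · refine Set.Finite.of_finite_image (((hH.finite hτ).image (gDownset S T H)).subset ?_)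
      Subtype.val_injective.injOn
    rintro _ ⟨G, hG, rfl⟩
    obtain ⟨p, hp, hGp⟩ := exists_eq_gDownset hσ hτ hH G hG
    exact ⟨p, hG hp, hGp.symm⟩
  · refine DownClosedIn.isSecBij hτ hH (Set.iUnion₂_subset fun G hG => hY hG) ?_
    intro q p hp hqp
    obtain ⟨G, hGY, hpG⟩ := Set.mem_iUnion₂.mp hp
    exact Set.mem_iUnion₂.mpr
      ⟨G, hGY, hH.downClosedIn_of_subset hσ hτ G.2.1 (hY hGY) hpG hqp⟩

lemma biUnion_setOf_subset (hτ : IsMap T A τ) {H : Set (S.Evt × T.Evt)}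
    (hH : IsSecBij S T A σ τ H) :
    (⋃ G ∈ {G : (Interaction S T A σ τ).Evt | G.val ⊆ H}, G.val) = H :=
  Set.Subset.antisymm (Set.iUnion₂_subset fun _ hG => hG) fun _ hp =>
    Set.mem_iUnion₂.mpr ⟨gDownsetEvt hτ hH hp, gDownset_subset, mem_gDownset_self hp⟩

noncomputable def gDownsetEquiv (hσ : IsMap S A σ) (hτ : IsMap T A τ)
    {x : Set (Interaction S T A σ τ).Evt} (hx : (Interaction S T A σ τ).Config x) :
    {p // p ∈ ⋃ G ∈ x, G.val} ≃ {G // G ∈ x} :=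
  Equiv.ofBijective
    (fun p => ⟨gDownsetEvt hτ (isSecBij_biUnion hx) p.2,
      mem_of_subset_biUnion hσ hτ hx gDownset_subset⟩)
    ⟨fun p q h => Subtype.ext <| (isSecBij_biUnion hx).2.2.2.2.2 _ _
        ((gDownset_subset_gDownset_iff p.2).mp (congrArg (·.val.val) h).le)
        ((gDownset_subset_gDownset_iff q.2).mp (congrArg (·.val.val) h).ge),
      fun G => by
        obtain ⟨p, hp, hG⟩ :=
          exists_eq_gDownset hσ hτ (isSecBij_biUnion hx) G.val
            (Set.subset_biUnion_of_mem G.2)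
        exact ⟨⟨p, Set.subset_biUnion_of_mem G.2 hp⟩, Subtype.ext (Subtype.ext hG.symm)⟩⟩

noncomputable def configOrderIso (hσ : IsMap S A σ) (hτ : IsMap T A τ) :
    InterConfigPoset S T A σ τ ≃o SBPoset S T A σ τ :=
  OrderIso.ofSurjective
    (OrderEmbedding.ofMapLEIff (fun x => ⟨⋃ G ∈ x.val, G.val, isSecBij_biUnion x.2⟩)
      fun _ y => biUnion_subset_biUnion_iff hσ hτ y.2)
    fun H => ⟨⟨_, config_setOf_subset hσ hτ H.2⟩, Subtype.ext (biUnion_setOf_subset hτ H.2)⟩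

end Interaction

theorem interaction_configurations_are_secured_bijections_general
    (S T A : ES)
    (σ : S.Evt → A.Evt) (τ : T.Evt → A.Evt)
    (hσ : IsMap S A σ) (hτ : IsMap T A τ) :
    (∀ x : Set (Interaction S T A σ τ).Evt, (Interaction S T A σ τ).Config x →
      IsSecBij S T A σ τ (⋃ G ∈ x, G.val) ∧
      ∃ F : {p // p ∈ ⋃ G ∈ x, G.val} ≃ {G // G ∈ x},
        (∀ p, ((F p).val).val =
            {q | q ∈ (⋃ G ∈ x, G.val) ∧
              Relation.ReflTransGen (gRel S T (⋃ G ∈ x, G.val)) q p.val}) ∧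
        (∀ p q, Relation.ReflTransGen (gRel S T (⋃ G ∈ x, G.val)) p.val q.val ↔
            ((F p).val).val ⊆ ((F q).val).val)) ∧
    ∃ Φ : InterConfigPoset S T A σ τ ≃o SBPoset S T A σ τ,
      ∀ x, (Φ x).val = ⋃ G ∈ x.val, G.val :=
  ⟨fun _ hx => ⟨Interaction.isSecBij_biUnion hx, Interaction.gDownsetEquiv hσ hτ hx,
      fun _ => rfl, fun p _ => (gDownset_subset_gDownset_iff p.2).symm⟩,
    Interaction.configOrderIso hσ hτ, fun _ => rfl⟩

/-- for every configuration `x` of the interaction `S ∧ T`, the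
union `φ_x` of the graphs of the elements of `x` is a secured bijection in
`SB(σ, τ)`; the map `(s, t) ↦ [(s, t)]_{φ_x}` is an order-isomorphism
`φ_x ≅ x`; and `x ↦ φ_x` defines an order-isomorphism `C(S ∧ T) ≅ SB(σ, τ)`. -/
theorem interaction_configurations_are_secured_bijections
    (S T A : ES) (hS : S.IsES) (hT : T.IsES) (hA : A.IsES)
    (σ : S.Evt → A.Evt) (τ : T.Evt → A.Evt)
    (hσ : IsMap S A σ) (hτ : IsMap T A τ) :
    (∀ x : Set (Interaction S T A σ τ).Evt, (Interaction S T A σ τ).Config x →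
      IsSecBij S T A σ τ (⋃ G ∈ x, G.val) ∧
      ∃ F : {p // p ∈ ⋃ G ∈ x, G.val} ≃ {G // G ∈ x},
        (∀ p, ((F p).val).val =
            {q | q ∈ (⋃ G ∈ x, G.val) ∧
              Relation.ReflTransGen (gRel S T (⋃ G ∈ x, G.val)) q p.val}) ∧
        (∀ p q, Relation.ReflTransGen (gRel S T (⋃ G ∈ x, G.val)) p.val q.val ↔
            ((F p).val).val ⊆ ((F q).val).val)) ∧
    ∃ Φ : InterConfigPoset S T A σ τ ≃o SBPoset S T A σ τ,
      ∀ x, (Φ x).val = ⋃ G ∈ x.val, G.val :=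
  interaction_configurations_are_secured_bijections_general S T A σ τ hσ hτ
end

section
/- In the copycat esp CC_A, one has (i, a) ⇢ (j, a') (immediate causality) if and only if either (1) i = j, a ⇢_A a', and ((i,a) is positive in CC_A or (j,a') is negative in CC_A); or (2) i ≠ j, a = a', and (i, a) is negative in CC_A. -/
/-- An event structure with polarities (`true` = positive/Player,
`false` = negative/Opponent). -/
structure ESP extends ES where
  pol : Evt → Bool

namespace ESP

/-- The dual game: polarities reversed. -/
def dual (A : ESP) : ESP where
  toES := A.toES
  pol := fun a => !A.pol a

/-- Simple parallel composition of games. -/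
def par (A B : ESP) : ESP where
  toES := A.toES.par B.toES
  pol := Sum.elim A.pol B.pol

end ESP

/-- A pre-strategy on the game `A`: a polarity-preserving map of event
structures `σ : S → A`. -/
def IsPreStrategy (S A : ESP) (σ : S.Evt → A.Evt) : Prop :=
  IsMap S.toES A.toES σ ∧ ∀ s, A.pol (σ s) = S.pol s

/-- `polExt pol b x y` means `x ⊆ y` and all events of `y \ x` have polarity `b`;
so `polExt pol true x y` is `x ⊆⁺ y` and `polExt pol false x y` is `x ⊆⁻ y`. -/
def polExt {α : Type} (pol : α → Bool) (b : Bool) (x y : Set α) : Prop :=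
  x ⊆ y ∧ ∀ a ∈ y, a ∉ x → pol a = b

/-- The Scott order: `x ⊑ y` iff `x ⊇⁻ (x ∩ y) ⊆⁺ y`. -/
def scottLE {α : Type} (pol : α → Bool) (x y : Set α) : Prop :=
  polExt pol false (x ∩ y) x ∧ polExt pol true (x ∩ y) y

/-- Courtesy: immediate causal links other than `− ⇢ +` are sent to immediate
causal links of the game. -/
def Courteous (S A : ESP) (σ : S.Evt → A.Evt) : Prop :=
  ∀ s s', S.toES.imc s s' → (S.pol s, S.pol s') ≠ (false, true) →
    A.toES.imc (σ s) (σ s')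

/-- Receptivity: every negative extension of `σ x` in the game is matched by a
unique extension of `x`. -/
def Receptive (S A : ESP) (σ : S.Evt → A.Evt) : Prop :=
  ∀ x, S.toES.Config x → ∀ a, A.pol a = false → a ∉ σ '' x →
    A.toES.Config (insert a (σ '' x)) →
    ∃! s, s ∉ x ∧ S.toES.Config (insert s x) ∧ σ s = a
/-- The generating relation of copycat causality on `A^⊥ ∥ A`:
the causality of `A^⊥ ∥ A` together with the links from each negative
occurrence to the corresponding positive occurrence on the other side. -/
def ccGen (A : ESP) : (A.Evt ⊕ A.Evt) → (A.Evt ⊕ A.Evt) → Prop :=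
  fun p q => (A.dual.par A).le p q ∨
    (∃ a, A.pol a = true ∧ p = Sum.inl a ∧ q = Sum.inr a) ∨
    (∃ a, A.pol a = false ∧ p = Sum.inr a ∧ q = Sum.inl a)

/-- The copycat structure `CC_A` on the game `A`. -/
def CC (A : ESP) : ESP where
  Evt := A.Evt ⊕ A.Evt
  le := Relation.ReflTransGen (ccGen A)
  Con := {X | {e | ∃ e' ∈ X, Relation.ReflTransGen (ccGen A) e e'} ∈ (A.dual.par A).Con}
  pol := (A.dual.par A).pol

/-! Causality in `CC A` is explicit: events on the same side are ordered as in `A`, and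
`(i, a) ≤ (1 - i, b)` iff the order crosses over at some `c` with `a ≤ c ≤ b` whose copy on
side `i` is negative in `CC A`. An immediate link across sides therefore forces `a = c = b`.
An immediate link on one side is an immediate link `a ⇢ b` of `A` unless a detour through
the other side fits strictly between; such a detour must leave at `(i, a)` and return at
`(i, b)`, which needs `(i, a)` negative and `(i, b)` positive. Swapping the two sides and
dualising `A` is a symmetry of copycat, so the cases starting on the right follow from those
on the left. -/

def ccLe (A : ESP) : A.Evt ⊕ A.Evt → A.Evt ⊕ A.Evt → Prop
  | .inl a, .inl b => A.le a b
  | .inr a, .inr b => A.le a b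
  | .inl a, .inr b => ∃ c, A.le a c ∧ A.le c b ∧ A.pol c = true
  | .inr a, .inl b => ∃ c, A.le a c ∧ A.le c b ∧ A.pol c = false

theorem ES.imc_congr {E F : ES} (e : E.Evt ≃ F.Evt) (he : ∀ x y, F.le (e x) (e y) ↔ E.le x y)
    {x y : E.Evt} : F.imc (e x) (e y) ↔ E.imc x y := by
  simp only [ES.imc, ES.lt, he, e.injective.ne_iff, ← e.forall_congr_right, e.injective.eq_iff]

section

variable {A : ESP}

theorem ccLe_tail (hrefl : ∀ e, A.le e e) (htrans : ∀ a b c, A.le a b → A.le b c → A.le a c)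
    {p q r : A.Evt ⊕ A.Evt} (hpq : ccLe A p q) (hqr : ccGen A q r) : ccLe A p r := by
  rcases hqr with hle | ⟨c, hc, rfl, rfl⟩ | ⟨c, hc, rfl, rfl⟩
  · cases p <;> cases q <;> cases r <;> simp only [ccLe, ESP.par, ES.par] at hpq hle ⊢
    all_goals first
      | exact htrans _ _ _ hpq hle
      | exact hle.elim
      | exact hpq.imp fun d hd => ⟨hd.1, htrans _ _ _ hd.2.1 hle, hd.2.2⟩
  all_goals cases p <;> simp only [ccLe] at hpq ⊢
  all_goals first
    | exact ⟨c, hpq, hrefl c, hc⟩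
    | exact hpq.elim fun d hd => htrans _ _ _ hd.1 hd.2.1

theorem ccLe_of_reflTransGen (hrefl : ∀ e, A.le e e)
    (htrans : ∀ a b c, A.le a b → A.le b c → A.le a c) {p q : A.Evt ⊕ A.Evt}
    (h : Relation.ReflTransGen (ccGen A) p q) : ccLe A p q := by
  induction h with
  | refl => cases p <;> exact hrefl _
  | tail _ hqr ih => exact ccLe_tail hrefl htrans ih hqr

theorem cc_le_inl_of_le {a b : A.Evt} (h : A.le a b) : (CC A).le (.inl a) (.inl b) :=
  .single (Or.inl h)

theorem cc_le_inr_of_le {a b : A.Evt} (h : A.le a b) : (CC A).le (.inr a) (.inr b) :=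
  .single (Or.inl h)

theorem cc_le_inl_inr {a b c : A.Evt} (hac : A.le a c) (hcb : A.le c b) (hc : A.pol c = true) :
    (CC A).le (.inl a) (.inr b) :=
  (cc_le_inl_of_le hac).trans <|
    .head (Or.inr <| Or.inl ⟨c, hc, rfl, rfl⟩) (cc_le_inr_of_le hcb)

theorem cc_le_inr_inl {a b c : A.Evt} (hac : A.le a c) (hcb : A.le c b) (hc : A.pol c = false) :
    (CC A).le (.inr a) (.inl b) :=
  (cc_le_inr_of_le hac).trans <|
    .head (Or.inr <| Or.inr ⟨c, hc, rfl, rfl⟩) (cc_le_inl_of_le hcb)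

theorem cc_le_iff (hrefl : ∀ e, A.le e e)
    (htrans : ∀ a b c, A.le a b → A.le b c → A.le a c) {p q : A.Evt ⊕ A.Evt} :
    (CC A).le p q ↔ ccLe A p q := by
  refine ⟨ccLe_of_reflTransGen hrefl htrans, fun h => ?_⟩
  cases p <;> cases q
  case inl.inl => exact cc_le_inl_of_le h
  case inr.inr => exact cc_le_inr_of_le h
  case inl.inr => exact h.elim fun c hc => cc_le_inl_inr hc.1 hc.2.1 hc.2.2
  case inr.inl => exact h.elim fun c hc => cc_le_inr_inl hc.1 hc.2.1 hc.2.2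

theorem ccGen_dual_swap_iff {p q : A.Evt ⊕ A.Evt} :
    ccGen A.dual p.swap q.swap ↔ ccGen A p q := by
  cases p <;> cases q <;> simp [ccGen, ESP.dual, ESP.par, ES.par, or_comm]

theorem cc_dual_le_swap_iff {p q : A.Evt ⊕ A.Evt} :
    (CC A.dual).le p.swap q.swap ↔ (CC A).le p q := by
  refine ⟨fun h => ?_, fun h => h.lift Sum.swap fun _ _ => ccGen_dual_swap_iff.mpr⟩
  have back : ∀ x y : A.Evt ⊕ A.Evt, ccGen A.dual x y → ccGen A x.swap y.swap :=
    fun x y h => by rwa [← ccGen_dual_swap_iff, Sum.swap_swap, Sum.swap_swap]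
  have h' := h.lift Sum.swap back
  simp only [Function.onFun, Sum.swap_swap] at h'
  exact h'

theorem cc_dual_imc_swap_iff {p q : A.Evt ⊕ A.Evt} :
    (CC A.dual).imc p.swap q.swap ↔ (CC A).imc p q :=
  ES.imc_congr (E := (CC A).toES) (F := (CC A.dual).toES) (Equiv.sumComm _ _)
    fun _ _ => cc_dual_le_swap_iff

theorem cc_imc_iff (hrefl : ∀ e, A.le e e)
    (htrans : ∀ a b c, A.le a b → A.le b c → A.le a c) {p q : A.Evt ⊕ A.Evt} :
    (CC A).imc p q ↔
      (ccLe A p q ∧ p ≠ q) ∧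
        ∀ c : A.Evt ⊕ A.Evt, ccLe A p c → ccLe A c q → c = p ∨ c = q :=
  and_congr (and_congr_left' (cc_le_iff hrefl htrans)) <| forall_congr' fun _ =>
    imp_congr (cc_le_iff hrefl htrans) (imp_congr (cc_le_iff hrefl htrans) Iff.rfl)

theorem cc_imc_inl_inl_iff (hrefl : ∀ e, A.le e e)
    (htrans : ∀ a b c, A.le a b → A.le b c → A.le a c)
    (hanti : ∀ a b, A.le a b → A.le b a → a = b) {a b : A.Evt} :
    (CC A).imc (.inl a) (.inl b) ↔ A.imc a b ∧ (A.pol a = false ∨ A.pol b = true) := by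
  rw [cc_imc_iff hrefl htrans]
  simp only [ccLe, ES.imc, ES.lt, Sum.forall, ne_eq, Sum.inl.injEq, reduceCtorEq, or_false]
  rw [← and_assoc]
  refine and_congr_right fun ⟨⟨hab, hne⟩, hmin⟩ => ⟨fun h => ?_, ?_⟩
  · by_contra! hpol
    simp only [ne_eq, Bool.not_eq_false, Bool.not_eq_true] at hpol
    exact h a ⟨a, hrefl a, hrefl a, hpol.1⟩ ⟨b, hab, hrefl b, hpol.2⟩
  · rintro hpol d ⟨e, hae, hed, he⟩ ⟨f, hdf, hfb, hf⟩
    have hef := htrans _ _ _ hed hdf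
    -- the crossings at `e ≤ f` have opposite polarities, so immediacy of `a ⇢ b` forces
    -- `e = a` and `f = b`, the configuration excluded by `hpol`
    have hef_ne : e ≠ f := by rintro rfl; simp_all
    obtain rfl | rfl := hmin e hae (htrans _ _ _ hef hfb)
    · obtain rfl : f = b := (hmin f hef hfb).resolve_left (Ne.symm hef_ne)
      simp_all
    · exact hef_ne (hanti _ _ hef hfb)

theorem cc_imc_inl_inr_iff (hrefl : ∀ e, A.le e e)
    (htrans : ∀ a b c, A.le a b → A.le b c → A.le a c)
    (hanti : ∀ a b, A.le a b → A.le b a → a = b) {a b : A.Evt} :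
    (CC A).imc (.inl a) (.inr b) ↔ b = a ∧ A.pol a = true := by
  rw [cc_imc_iff hrefl htrans]
  simp only [ccLe, Sum.forall, ne_eq, Sum.inl.injEq, Sum.inr.injEq,
    reduceCtorEq, not_false_eq_true, and_true, or_false, false_or]
  constructor
  · rintro ⟨⟨c, hac, hcb, hc⟩, hlow, hhigh⟩
    have hca : c = a := hlow c hac ⟨c, hrefl c, hcb, hc⟩
    have hcb' : c = b := hhigh c ⟨c, hac, hrefl c, hc⟩ hcb
    exact ⟨hcb'.symm.trans hca, hca ▸ hc⟩
  · rintro ⟨rfl, hb⟩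
    exact ⟨⟨b, hrefl b, hrefl b, hb⟩,
      fun d hbd ⟨e, hde, heb, _⟩ => hanti _ _ (htrans _ _ _ hde heb) hbd,
      fun d ⟨e, hbe, hed, _⟩ hdb => hanti _ _ hdb (htrans _ _ _ hbe hed)⟩

theorem cc_imc_inr_inr_iff (hrefl : ∀ e, A.le e e)
    (htrans : ∀ a b c, A.le a b → A.le b c → A.le a c)
    (hanti : ∀ a b, A.le a b → A.le b a → a = b) {a b : A.Evt} :
    (CC A).imc (.inr a) (.inr b) ↔ A.imc a b ∧ (A.pol a = true ∨ A.pol b = false) := by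
  rw [← cc_dual_imc_swap_iff]
  simpa [ESP.dual] using cc_imc_inl_inl_iff (A := A.dual) hrefl htrans hanti

theorem cc_imc_inr_inl_iff (hrefl : ∀ e, A.le e e)
    (htrans : ∀ a b c, A.le a b → A.le b c → A.le a c)
    (hanti : ∀ a b, A.le a b → A.le b a → a = b) {a b : A.Evt} :
    (CC A).imc (.inr a) (.inl b) ↔ b = a ∧ A.pol a = false := by
  rw [← cc_dual_imc_swap_iff]
  simpa [ESP.dual] using cc_imc_inl_inr_iff (A := A.dual) hrefl htrans hanti

theorem cc_pol_inl (a : A.Evt) : (CC A).pol (.inl a) = !A.pol a := rfl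

theorem cc_pol_inr (a : A.Evt) : (CC A).pol (.inr a) = A.pol a := rfl

end

/-- immediate causal links in copycat: `(i,a) ⇢ (j,a')` iff
either (1) `i = j`, `a ⇢_A a'`, and `(i,a)` is positive in `CC_A` or `(j,a')`
is negative in `CC_A`; or (2) `i ≠ j`, `a = a'`, and `(i,a)` is negative. -/
theorem copycat_immediate_causality
    (A : ESP) (hA : A.toES.IsES) (p q : A.Evt ⊕ A.Evt) :
    (CC A).toES.imc p q ↔
      ((∃ a a', ((p = Sum.inl a ∧ q = Sum.inl a') ∨
                 (p = Sum.inr a ∧ q = Sum.inr a')) ∧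
         A.toES.imc a a' ∧
         ((CC A).pol p = true ∨ (CC A).pol q = false)) ∨
       (∃ a, ((p = Sum.inl a ∧ q = Sum.inr a) ∨
              (p = Sum.inr a ∧ q = Sum.inl a)) ∧
         (CC A).pol p = false)) := by
  obtain ⟨hrefl, htrans, hanti, -⟩ := hA
  cases p <;> cases q <;>
    simp [cc_imc_inl_inl_iff hrefl htrans hanti, cc_imc_inl_inr_iff hrefl htrans hanti,
      cc_imc_inr_inr_iff hrefl htrans hanti, cc_imc_inr_inl_iff hrefl htrans hanti,
      cc_pol_inl, cc_pol_inr]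
end

section
/- (Deadlock-free lemma) Let τ : T → A^⊥ ∥ B be a pre-strategy such that whenever t ≤_T t' and both τ(t) and τ(t') lie in the component A^⊥, then τ(t) ≤ τ(t'). Let σ : S → A be a pre-strategy, and let x ∈ C(S), y ∈ C(T), z ∈ C(B) with σx ∥ z = τy. Then the bijection x ∥ z ≃ y induced by local injectivity is secured. Consequently there is an order-isomorphism C(T ⊛ S) ≅ { (x, y) ∈ C(S) × C(T) | σx ∥ z = τy for some z ∈ C(B) } (ordered componentwise by inclusion), where T ⊛ S is the interaction, namely the pullback of σ ∥ id_B and τ. -/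
/-- The interaction `T ⊛ S` of `σ : S → A` with `τ : T → A^⊥ ∥ B`: the
pullback of `σ ∥ id_B` and `τ` over `A ∥ B` (polarities ignored). -/
def InterTS (S : ESP) (A B : ESP) (T : ESP)
    (σ : S.Evt → A.Evt) (τ : T.Evt → A.Evt ⊕ B.Evt) : ES :=
  Interaction (S.toES.par B.toES) T.toES (A.toES.par B.toES) (Sum.map σ id) τ

/-- The poset of configurations of `T ⊛ S`, ordered by inclusion. -/
def InterTSConfigPoset (S : ESP) (A B : ESP) (T : ESP)
    (σ : S.Evt → A.Evt) (τ : T.Evt → A.Evt ⊕ B.Evt) : Type :=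
  {w : Set (InterTS S A B T σ τ).Evt // (InterTS S A B T σ τ).Config w}

instance (S : ESP) (A B : ESP) (T : ESP)
    (σ : S.Evt → A.Evt) (τ : T.Evt → A.Evt ⊕ B.Evt) :
    PartialOrder (InterTSConfigPoset S A B T σ τ) := Subtype.partialOrder _

/-- The poset of matching pairs of configurations
`{(x, y) ∈ C(S) × C(T) | σ x ∥ z = τ y for some z ∈ C(B)}`, ordered by
componentwise inclusion. -/
def MatchingPairsPoset (S : ESP) (A B : ESP) (T : ESP)
    (σ : S.Evt → A.Evt) (τ : T.Evt → A.Evt ⊕ B.Evt) : Type :=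
  {p : Set S.Evt × Set T.Evt // S.toES.Config p.1 ∧ T.toES.Config p.2 ∧
    ∃ z, B.toES.Config z ∧
      (Sum.inl '' (σ '' p.1) ∪ Sum.inr '' z : Set (A.Evt ⊕ B.Evt)) = τ '' p.2}

instance (S : ESP) (A B : ESP) (T : ESP)
    (σ : S.Evt → A.Evt) (τ : T.Evt → A.Evt ⊕ B.Evt) :
    PartialOrder (MatchingPairsPoset S A B T σ τ) := Subtype.partialOrder _


namespace DLF
open Relation

variable {C : Type}

/-- Cyclic path encoding: an `n`-periodic function with a step from each value
to the next. -/
def IsCyc (step : C → C → Prop) (n : ℕ) (f : ℕ → C) : Prop :=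
  (∀ i, f (i + n) = f i) ∧ ∀ i, step (f i) (f (i + 1))

lemma mod_succ_cases (n i : ℕ) (hn : 0 < n) :
    (i + 1) % n = i % n + 1 ∨ (i % n + 1 = n ∧ (i + 1) % n = 0) := by
  have h1 : i % n < n := Nat.mod_lt _ hn
  have key : (i + 1) % n = (i % n + 1) % n := by
    conv_lhs => rw [← Nat.mod_add_mod]
  rcases eq_or_lt_of_le (Nat.succ_le_of_lt h1) with h | h
  · right
    refine ⟨h, ?_⟩
    rw [key, show i % n + 1 = n from h, Nat.mod_self]
  · left
    rw [key, Nat.mod_eq_of_lt h]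

lemma path_of_transGen {step : C → C → Prop} {a b : C} (h : TransGen step a b) :
    ∃ (n : ℕ) (f : ℕ → C), 0 < n ∧ f 0 = a ∧ f n = b ∧ ∀ i < n, step (f i) (f (i + 1)) := by
  induction h with
  | @single c hs =>
    exact ⟨1, fun i => if i = 0 then a else c, Nat.one_pos, rfl, rfl, by
      intro i hi
      interval_cases i
      simpa using hs⟩
  | @tail b c _ hs ih =>
    obtain ⟨n, f, hn, h0, hb, hstep⟩ := ih
    refine ⟨n + 1, fun i => if i ≤ n then f i else c, hn.trans (Nat.lt_succ_self n), ?_, ?_, ?_⟩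
    · simp [h0]
    · simp
    · intro i hi
      dsimp only
      rcases Nat.lt_or_ge i n with h' | h'
      · rw [if_pos (Nat.le_of_lt h'), if_pos (Nat.succ_le_of_lt h')]
        exact hstep i h'
      · have : i = n := by omega
        subst this
        rw [if_pos le_rfl, if_neg (by omega)]
        rw [hb]
        exact hs

lemma cyc_of_transGen {step : C → C → Prop} {a : C} (h : TransGen step a a) :
    ∃ n f, 0 < n ∧ IsCyc step n f := by
  obtain ⟨n, f, hn, h0, hb, hstep⟩ := path_of_transGen h
  refine ⟨n, fun j => f (j % n), hn, fun i => ?_, fun i => ?_⟩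
  · simp only [Nat.add_mod_right]
  · have hi : i % n < n := Nat.mod_lt _ hn
    have hs := hstep (i % n) hi
    dsimp only
    rcases mod_succ_cases n i hn with h' | ⟨h1, h2⟩
    · rw [h']; exact hs
    · rw [h2, h0, ← hb]
      rw [h1] at hs
      exact hs

theorem no_cyc {R Q : C → C → Prop} (Aty : C → Prop)
    (hRt : ∀ {a b c}, R a b → R b c → R a c)
    (hQt : ∀ {a b c}, Q a b → Q b c → Q a c)
    (hRi : ∀ a, ¬ R a a) (hQi : ∀ a, ¬ Q a a)
    (hRty : ∀ {a b}, R a b → (Aty a ↔ Aty b))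
    (hRQ : ∀ {a b}, R a b → ¬ Aty a → Q a b)
    (hQR : ∀ {a b}, Q a b → Aty a → Aty b → R a b) :
    ∀ n, 0 < n → ∀ f, ¬ IsCyc (fun a b => R a b ∨ Q a b) n f := by
  intro n
  induction n using Nat.strong_induction_on with
  | _ n IH =>
    rintro hn f ⟨hper, hstep⟩
    rcases Nat.lt_or_ge n 2 with hn2 | hn2
    · -- n = 1
      have hn1 : n = 1 := by omega
      have h01 : f 1 = f 0 := by
        have := hper 0
        rwa [hn1, Nat.zero_add] at this
      have := hstep 0
      rw [Nat.zero_add, h01] at this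
      rcases this with h | h
      · exact hRi _ h
      · exact hQi _ h
    by_cases hcomp : ∃ i,
        (R (f i) (f (i + 1)) ∧ R (f (i + 1)) (f (i + 2))) ∨
        (Q (f i) (f (i + 1)) ∧ Q (f (i + 1)) (f (i + 2)))
    · obtain ⟨i, hi⟩ := hcomp
      set g : ℕ → C := fun j => f (j + i) with hg
      have hperg : ∀ j, g (j + n) = f (j + i + n) := fun j => by
        simp only [hg]; congr 1; omega
      have hstep02 : R (g 0) (g 2) ∨ Q (g 0) (g 2) := by
        have e0 : g 0 = f i := by simp [hg]
        have e1 : g 2 = f (i + 2) := by simp [hg, Nat.add_comm]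
        rw [e0, e1]
        have e2 : f (i + 1) = f (i + 1) := rfl
        rcases hi with ⟨h1, h2⟩ | ⟨h1, h2⟩
        · exact Or.inl (hRt h1 h2)
        · exact Or.inr (hQt h1 h2)
      have hstepg : ∀ j, R (g j) (g (j + 1)) ∨ Q (g j) (g (j + 1)) := by
        intro j
        have := hstep (j + i)
        have e : j + i + 1 = j + 1 + i := by omega
        rw [e] at this
        exact this
      have hperg' : ∀ j, g (j + n) = g j := by
        intro j
        rw [hperg]
        have e : j + i + n = j + i + n := rfl
        have := hper (j + i)
        simpa [hg] using this
      set m := n - 1 with hm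
      have hm0 : 0 < m := by omega
      have hmn : m < n := by omega
      -- the shortened cycle skips g 1 : vertices g 2, g 3, ..., g (m+1) = g n = g 0
      refine IH m hmn hm0 (fun j => g (j % m + 2)) ⟨fun j => ?_, fun j => ?_⟩
      · simp only [Nat.add_mod_right]
      · have hjm : j % m < m := Nat.mod_lt _ hm0
        dsimp only
        rcases mod_succ_cases m j hm0 with h' | ⟨h1, h2⟩
        · rw [h']
          have := hstepg (j % m + 2)
          have e : j % m + 2 + 1 = j % m + 1 + 2 := by omega
          rw [e] at this
          exact this
        · rw [h2]
          have esrc : g (j % m + 2) = g 0 := by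
            have : j % m + 2 = 0 + n := by omega
            rw [this, hperg']
          rw [esrc]
          exact hstep02
    · -- no composable consecutive pair
      have hc : ∀ i, ¬ (R (f i) (f (i + 1)) ∧ R (f (i + 1)) (f (i + 2))) ∧
          ¬ (Q (f i) (f (i + 1)) ∧ Q (f (i + 1)) (f (i + 2))) := by
        intro i
        constructor
        · intro h; exact hcomp ⟨i, Or.inl h⟩
        · intro h; exact hcomp ⟨i, Or.inr h⟩
      have honly : ∀ i, ¬ (R (f i) (f (i + 1)) ∧ Q (f i) (f (i + 1))) := by
        rintro i ⟨hR, hQ⟩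
        rcases hstep (i + 1) with h | h
        · exact (hc i).1 ⟨hR, by rwa [show i + 1 + 1 = i + 2 by omega] at h⟩
        · exact (hc i).2 ⟨hQ, by rwa [show i + 1 + 1 = i + 2 by omega] at h⟩
      have hsrcA : ∀ j, R (f j) (f (j + 1)) → Aty (f j) := by
        intro j hR
        by_contra hA
        exact honly j ⟨hR, hRQ hR hA⟩
      have hAty : ∀ i, Aty (f i) := by
        intro i
        rcases hstep i with h | h
        · exact hsrcA i h
        · -- step i is a Q step; consider the previous step (index i + n - 1)
          have e1 : f (i + n - 1 + 1) = f i := by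
            rw [show i + n - 1 + 1 = i + n by omega, hper]
          rcases hstep (i + n - 1) with hR | hQ
          · have hA1 := hsrcA _ hR
            have h2 := hRty hR
            rw [e1] at h2
            exact h2.mp hA1
          · exfalso
            apply (hc (i + n - 1)).2
            refine ⟨hQ, ?_⟩
            have e2 : f (i + n - 1 + 2) = f (i + 1) := by
              rw [show i + n - 1 + 2 = i + 1 + n by omega, hper]
            rw [e1, e2]
            exact h
      have hallR : ∀ i, R (f i) (f (i + 1)) := by
        intro i
        rcases hstep i with h | h
        · exact h
        · exact hQR h (hAty i) (hAty (i + 1))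
      exact (hc 0).1 ⟨hallR 0, by simpa [show (0:ℕ) + 1 + 1 = 0 + 2 by omega] using hallR 1⟩

/-- The main combinatorial consequence: the union relation has no nontrivial
cycles, i.e. its reflexive-transitive closure is antisymmetric. -/
theorem secured_of_no_cyc {step R Q : C → C → Prop} (Aty : C → Prop)
    (hdec : ∀ a b, step a b ↔ R a b ∨ Q a b)
    (hRt : ∀ {a b c}, R a b → R b c → R a c)
    (hQt : ∀ {a b c}, Q a b → Q b c → Q a c)
    (hRi : ∀ a, ¬ R a a) (hQi : ∀ a, ¬ Q a a)
    (hRty : ∀ {a b}, R a b → (Aty a ↔ Aty b))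
    (hRQ : ∀ {a b}, R a b → ¬ Aty a → Q a b)
    (hQR : ∀ {a b}, Q a b → Aty a → Aty b → R a b) :
    ∀ p q, ReflTransGen step p q → ReflTransGen step q p → p = q := by
  intro p q h1 h2
  by_contra hne
  have t1 : TransGen step p q := by
    rcases Relation.reflTransGen_iff_eq_or_transGen.mp h1 with h | h
    · exact absurd h.symm hne
    · exact h
  have t2 : TransGen step q p := by
    rcases Relation.reflTransGen_iff_eq_or_transGen.mp h2 with h | h
    · exact absurd h hne
    · exact h
  have t3 : TransGen step p p := t1.trans t2
  have t4 : TransGen (fun a b => R a b ∨ Q a b) p p := by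
    refine TransGen.mono (r := step) (p := fun a b => R a b ∨ Q a b) ?_ _ _ t3
    intro a b hab
    exact (hdec a b).mp hab
  obtain ⟨n, f, hn, hcyc⟩ := cyc_of_transGen t4
  exact no_cyc Aty (fun {a b c} => @hRt a b c) (fun {a b c} => @hQt a b c) hRi hQi (fun {a b} => @hRty a b) (fun {a b} => @hRQ a b) (fun {a b} => @hQR a b) n hn f hcyc

end DLF
namespace DLF
open Relation Set

/-! ### Generic event structure lemmas -/

lemma config_con {E : ES} {x Y : Set E.Evt} (hx : E.Config x) (hY : Y ⊆ x) (hfin : Y.Finite) :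
    Y ∈ E.Con := hx.2.1 Y hY hfin

lemma config_down {E : ES} {x : Set E.Evt} (hx : E.Config x) {e e' : E.Evt}
    (he : e ∈ x) (hle : E.le e' e) : e' ∈ x := hx.2.2 e he e' hle

/-- The down-closure `[e]` inside a configuration is a configuration. -/
lemma config_dc {E : ES} (hE : E.IsES) {x : Set E.Evt} (hx : E.Config x) {e : E.Evt}
    (he : e ∈ x) : E.Config {e' | E.le e' e} := by
  have hsub : {e' | E.le e' e} ⊆ x := fun a ha => config_down hx he ha
  refine ⟨hE.2.2.2.1 e, fun Y hY hYf => config_con hx (hY.trans hsub) hYf, ?_⟩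
  intro a ha b hb
  exact hE.2.1 b a e hb ha

lemma config_subset {E : ES} {x y : Set E.Evt} (hx : E.Config x) (hy : y ⊆ x)
    (hdown : ∀ e ∈ y, ∀ e', E.le e' e → e' ∈ y) : E.Config y :=
  ⟨hx.1.subset hy, fun Y hY hYf => config_con hx (hY.trans hy) hYf, hdown⟩

/-! ### Parallel composition -/

lemma par_le_inl {E F : ES} {a b : E.Evt} :
    (E.par F).le (Sum.inl a) (Sum.inl b) ↔ E.le a b := Iff.rfl

lemma par_le_inr {E F : ES} {a b : F.Evt} :
    (E.par F).le (Sum.inr a) (Sum.inr b) ↔ F.le a b := Iff.rfl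

lemma par_le_cases {E F : ES} {p q : E.Evt ⊕ F.Evt} (h : (E.par F).le p q) :
    (∃ a b, p = Sum.inl a ∧ q = Sum.inl b ∧ E.le a b) ∨
    (∃ a b, p = Sum.inr a ∧ q = Sum.inr b ∧ F.le a b) := by
  rcases p with a | a <;> rcases q with b | b
  · exact Or.inl ⟨a, b, rfl, rfl, h⟩
  · exact absurd h (by intro h; exact h)
  · exact absurd h (by intro h; exact h)
  · exact Or.inr ⟨a, b, rfl, rfl, h⟩

lemma par_trans {E F : ES} (hE : E.IsES) (hF : F.IsES) :
    ∀ a b c, (E.par F).le a b → (E.par F).le b c → (E.par F).le a c := by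
  rintro (a | a) (b | b) (c | c) h1 h2 <;> first
    | exact hE.2.1 a b c h1 h2
    | exact hF.2.1 a b c h1 h2
    | exact absurd h1 (by intro h; exact h)
    | exact absurd h2 (by intro h; exact h)

lemma par_antisymm {E F : ES} (hE : E.IsES) (hF : F.IsES) :
    ∀ a b, (E.par F).le a b → (E.par F).le b a → a = b := by
  rintro (a | a) (b | b) h1 h2 <;> first
    | exact congrArg Sum.inl (hE.2.2.1 a b h1 h2)
    | exact congrArg Sum.inr (hF.2.2.1 a b h1 h2)
    | exact absurd h1 (by intro h; exact h)

lemma lt_trans' {E : ES} (hE : E.IsES) {a b c : E.Evt} (h1 : E.lt a b) (h2 : E.lt b c) :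
    E.lt a c := by
  refine ⟨hE.2.1 a b c h1.1 h2.1, fun h => ?_⟩
  subst h
  exact h2.2 (hE.2.2.1 b a h2.1 h1.1)

lemma par_lt_trans {E F : ES} (hE : E.IsES) (hF : F.IsES) {a b c : E.Evt ⊕ F.Evt}
    (h1 : (E.par F).lt a b) (h2 : (E.par F).lt b c) : (E.par F).lt a c := by
  refine ⟨par_trans hE hF a b c h1.1 h2.1, fun h => ?_⟩
  subst h
  exact h2.2 (par_antisymm hE hF b a h2.1 h1.1)

lemma par_config_iff {E F : ES} {u : Set (E.Evt ⊕ F.Evt)} :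
    (E.par F).Config u ↔ E.Config (Sum.inl ⁻¹' u) ∧ F.Config (Sum.inr ⁻¹' u) := by
  constructor
  · intro hu
    refine ⟨⟨hu.1.preimage Sum.inl_injective.injOn, ?_, ?_⟩,
            ⟨hu.1.preimage Sum.inr_injective.injOn, ?_, ?_⟩⟩
    · intro Y hY hYf
      have h1 : (Sum.inl '' Y : Set (E.Evt ⊕ F.Evt)) ⊆ u := by
        rintro _ ⟨a, ha, rfl⟩; exact hY ha
      have h2 := config_con hu h1 (hYf.image _)
      have : Sum.inl ⁻¹' (Sum.inl '' Y : Set (E.Evt ⊕ F.Evt)) = Y :=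
        Set.preimage_image_eq Y Sum.inl_injective
      rw [← this]
      exact h2.1
    · intro a ha b hb
      exact config_down hu (e := Sum.inl a) (e' := Sum.inl b) ha hb
    · intro Y hY hYf
      have h1 : (Sum.inr '' Y : Set (E.Evt ⊕ F.Evt)) ⊆ u := by
        rintro _ ⟨a, ha, rfl⟩; exact hY ha
      have h2 := config_con hu h1 (hYf.image _)
      have : Sum.inr ⁻¹' (Sum.inr '' Y : Set (E.Evt ⊕ F.Evt)) = Y :=
        Set.preimage_image_eq Y Sum.inr_injective
      rw [← this]
      exact h2.2
    · intro a ha b hb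
      exact config_down hu (e := Sum.inr a) (e' := Sum.inr b) ha hb
  · rintro ⟨h1, h2⟩
    have hsplit : Sum.inl '' (Sum.inl ⁻¹' u) ∪ Sum.inr '' (Sum.inr ⁻¹' u) = u :=
      Set.image_preimage_inl_union_image_preimage_inr u
    refine ⟨?_, ?_, ?_⟩
    · rw [← hsplit]
      exact (h1.1.image _).union (h2.1.image _)
    · intro Y hY hYf
      constructor
      · exact config_con h1 (fun a ha => hY ha) (hYf.preimage Sum.inl_injective.injOn)
      · exact config_con h2 (fun a ha => hY ha) (hYf.preimage Sum.inr_injective.injOn)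
    · rintro (e | e) he (e' | e') hle
      · exact config_down h1 he hle
      · exact absurd hle (by intro h; exact h)
      · exact absurd hle (by intro h; exact h)
      · exact config_down h2 he hle

lemma par_config_union {E F : ES} {x : Set E.Evt} {z : Set F.Evt}
    (hx : E.Config x) (hz : F.Config z) :
    (E.par F).Config (Sum.inl '' x ∪ Sum.inr '' z) := by
  refine par_config_iff.mpr ?_
  constructor
  · have : Sum.inl ⁻¹' (Sum.inl '' x ∪ Sum.inr '' z : Set (E.Evt ⊕ F.Evt)) = x := by
      rw [Set.preimage_union, Set.preimage_image_eq x Sum.inl_injective,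
        Set.preimage_inl_image_inr]
      simp
    exact (congrArg E.Config this).mpr hx
  · have : Sum.inr ⁻¹' (Sum.inl '' x ∪ Sum.inr '' z : Set (E.Evt ⊕ F.Evt)) = z := by
      rw [Set.preimage_union, Set.preimage_image_eq z Sum.inr_injective,
        Set.preimage_inr_image_inl]
      simp
    exact (congrArg F.Config this).mpr hz

end DLF
namespace DLF
open Relation Set

section Main

variable {S A B T : ESP} {σ : S.Evt → A.Evt} {τ : T.Evt → A.Evt ⊕ B.Evt}

lemma tau_config (hτ : IsPreStrategy T (A.dual.par B) τ) {y : Set T.Evt}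
    (hy : T.toES.Config y) : (A.toES.par B.toES).Config (τ '' y) := hτ.1.1 y hy

lemma tau_inj (hτ : IsPreStrategy T (A.dual.par B) τ) {y : Set T.Evt}
    (hy : T.toES.Config y) : Set.InjOn τ y := hτ.1.2 y hy

lemma mem_inl_union {α β : Type} {x : Set α} {z : Set β} {a : α} :
    Sum.inl a ∈ (Sum.inl '' x ∪ Sum.inr '' z : Set (α ⊕ β)) ↔ a ∈ x := by
  constructor
  · rintro (⟨b, hb, hba⟩ | ⟨b, hb, hba⟩)
    · cases hba; exact hb
    · cases hba
  · intro h; exact Or.inl ⟨a, h, rfl⟩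

lemma mem_inr_union {α β : Type} {x : Set α} {z : Set β} {b : β} :
    Sum.inr b ∈ (Sum.inl '' x ∪ Sum.inr '' z : Set (α ⊕ β)) ↔ b ∈ z := by
  constructor
  · rintro (⟨c, hc, hcb⟩ | ⟨c, hc, hcb⟩)
    · cases hcb
    · cases hcb; exact hc
  · intro h; exact Or.inr ⟨b, h, rfl⟩

theorem part1 (hS : S.toES.IsES) (hB : B.toES.IsES) (hT : T.toES.IsES)
    (hσ : IsPreStrategy S A σ) (hτ : IsPreStrategy T (A.dual.par B) τ)
    (hτA : ∀ t t' a a', T.le t t' → τ t = Sum.inl a → τ t' = Sum.inl a' → A.le a a')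
    (x : Set S.Evt) (y : Set T.Evt) (z : Set B.Evt)
    (hx : S.toES.Config x) (hy : T.toES.Config y) (hz : B.toES.Config z) :
    SecuredOn (S.toES.par B.toES) T.toES
      {p : (S.Evt ⊕ B.Evt) × T.Evt |
        p.1 ∈ Sum.inl '' x ∪ Sum.inr '' z ∧ p.2 ∈ y ∧
        Sum.map σ id p.1 = τ p.2} := by
  set G : Set ((S.Evt ⊕ B.Evt) × T.Evt) :=
    {p | p.1 ∈ Sum.inl '' x ∪ Sum.inr '' z ∧ p.2 ∈ y ∧ Sum.map σ id p.1 = τ p.2} with hG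
  set R : ((S.Evt ⊕ B.Evt) × T.Evt) → ((S.Evt ⊕ B.Evt) × T.Evt) → Prop :=
    fun c c' => c ∈ G ∧ c' ∈ G ∧ (S.toES.par B.toES).lt c.1 c'.1 with hR
  set Q : ((S.Evt ⊕ B.Evt) × T.Evt) → ((S.Evt ⊕ B.Evt) × T.Evt) → Prop :=
    fun c c' => c ∈ G ∧ c' ∈ G ∧ T.toES.lt c.2 c'.2 with hQ
  -- facts extracted from membership in G
  have hGmem : ∀ c ∈ G, c.1 ∈ (Sum.inl '' x ∪ Sum.inr '' z : Set (S.Evt ⊕ B.Evt)) ∧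
      c.2 ∈ y ∧ Sum.map σ id c.1 = τ c.2 := fun c hc => hc
  -- the two conversion facts
  have hD2 : ∀ {c c'}, R c c' → ¬ (c.1.isLeft = true) → Q c c' := by
    rintro c c' ⟨hc, hc', hlt⟩ hA
    rcases par_le_cases hlt.1 with ⟨a, b, h1, h2, hab⟩ | ⟨b, b', h1, h2, hbb⟩
    · rw [h1] at hA; simp at hA
    · -- B-side step
      have hne1 : b ≠ b' := by
        intro h; exact hlt.2 (by rw [h1, h2, h])
      have htb : τ c.2 = Sum.inr b := by
        have := (hGmem c hc).2.2; rw [h1] at this; simpa using this.symm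
      have htb' : τ c'.2 = Sum.inr b' := by
        have := (hGmem c' hc').2.2; rw [h2] at this; simpa using this.symm
      have ht'y : c'.2 ∈ y := (hGmem c' hc').2.1
      have hty : c.2 ∈ y := (hGmem c hc).2.1
      -- down-closure of [c'.2] in T
      have hdc : T.toES.Config {e | T.toES.le e c'.2} := config_dc hT hy ht'y
      have himg : (A.toES.par B.toES).Config (τ '' {e | T.toES.le e c'.2}) :=
        tau_config hτ hdc
      have hmem : τ c'.2 ∈ τ '' {e | T.toES.le e c'.2} :=
        ⟨c'.2, hT.1 c'.2, rfl⟩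
      have hdown : (Sum.inr b : A.Evt ⊕ B.Evt) ∈ τ '' {e | T.toES.le e c'.2} := by
        apply config_down himg hmem
        rw [htb']
        exact hbb
      obtain ⟨t'', ht''le, ht''⟩ := hdown
      have ht''y : t'' ∈ y := config_down hy ht'y ht''le
      have : t'' = c.2 := tau_inj hτ hy ht''y hty (by rw [ht'', htb])
      subst this
      refine ⟨hc, hc', ht''le, fun h => ?_⟩
      rw [h, htb'] at htb
      exact hne1 (Sum.inr.inj htb).symm
  have hD1 : ∀ {c c'}, Q c c' → c.1.isLeft = true → c'.1.isLeft = true → R c c' := by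
    rintro c c' ⟨hc, hc', hlt⟩ hA hA'
    obtain ⟨s, hs⟩ : ∃ s, c.1 = Sum.inl s := by
      rcases h : c.1 with s | b
      · exact ⟨s, rfl⟩
      · rw [h] at hA; simp at hA
    obtain ⟨s', hs'⟩ : ∃ s', c'.1 = Sum.inl s' := by
      rcases h : c'.1 with s | b
      · exact ⟨s, rfl⟩
      · rw [h] at hA'; simp at hA'
    have hta : τ c.2 = Sum.inl (σ s) := by
      have := (hGmem c hc).2.2; rw [hs] at this; simpa using this.symm
    have hta' : τ c'.2 = Sum.inl (σ s') := by
      have := (hGmem c' hc').2.2; rw [hs'] at this; simpa using this.symm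
    have hty : c.2 ∈ y := (hGmem c hc).2.1
    have ht'y : c'.2 ∈ y := (hGmem c' hc').2.1
    have hale : A.le (σ s) (σ s') := hτA c.2 c'.2 (σ s) (σ s') hlt.1 hta hta'
    have hane : σ s ≠ σ s' := by
      intro h
      apply hlt.2
      apply tau_inj hτ hy hty ht'y
      rw [hta, hta', h]
    have hsx : s ∈ x := by
      have := (hGmem c hc).1; rw [hs] at this; exact mem_inl_union.mp this
    have hs'x : s' ∈ x := by
      have := (hGmem c' hc').1; rw [hs'] at this; exact mem_inl_union.mp this
    have hdc : S.toES.Config {e | S.toES.le e s'} := config_dc hS hx hs'x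
    have himg : A.toES.Config (σ '' {e | S.toES.le e s'}) := hσ.1.1 _ hdc
    have hmem : σ s' ∈ σ '' {e | S.toES.le e s'} := ⟨s', hS.1 s', rfl⟩
    have hdown : σ s ∈ σ '' {e | S.toES.le e s'} := config_down himg hmem hale
    obtain ⟨s'', hs''le, hs''⟩ := hdown
    have hs''x : s'' ∈ x := config_down hx hs'x hs''le
    have hss : s'' = s := hσ.1.2 x hx hs''x hsx hs''
    refine ⟨hc, hc', ?_, fun h => ?_⟩
    · rw [hs, hs']
      exact hss ▸ hs''le
    · rw [hs, hs'] at h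
      exact hane (congrArg σ (Sum.inl.inj h))
  intro p q h1 h2
  refine secured_of_no_cyc (step := gRel (S.toES.par B.toES) T.toES G)
    (R := R) (Q := Q) (fun c => c.1.isLeft = true) ?_ ?_ ?_ ?_ ?_ ?_ ?_ ?_ p q h1 h2
  · intro a b
    constructor
    · rintro ⟨ha, hb, h | h⟩
      · exact Or.inl ⟨ha, hb, h⟩
      · exact Or.inr ⟨ha, hb, h⟩
    · rintro (⟨ha, hb, h⟩ | ⟨ha, hb, h⟩)
      · exact ⟨ha, hb, Or.inl h⟩
      · exact ⟨ha, hb, Or.inr h⟩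
  · rintro a b c ⟨h1, h2, h3⟩ ⟨h4, h5, h6⟩
    exact ⟨h1, h5, par_lt_trans hS hB h3 h6⟩
  · rintro a b c ⟨h1, h2, h3⟩ ⟨h4, h5, h6⟩
    exact ⟨h1, h5, lt_trans' hT h3 h6⟩
  · rintro a ⟨_, _, h⟩; exact h.2 rfl
  · rintro a ⟨_, _, h⟩; exact h.2 rfl
  · rintro a b ⟨_, _, h⟩
    rcases par_le_cases h.1 with ⟨u, v, h1, h2, _⟩ | ⟨u, v, h1, h2, _⟩ <;>
      simp [h1, h2]
  · intro a b h hA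
    exact hD2 h hA
  · intro a b h hA hA'
    exact hD1 h hA hA'

end Main
end DLF
namespace DLF
open Relation Set

section Main2

variable {S A B T : ESP} {σ : S.Evt → A.Evt} {τ : T.Evt → A.Evt ⊕ B.Evt}

/-- image of `Sum.map σ id` on a split union. -/
lemma f_image_union {x : Set S.Evt} {z : Set B.Evt} :
    Sum.map σ id '' (Sum.inl '' x ∪ Sum.inr '' z) =
      (Sum.inl '' (σ '' x) ∪ Sum.inr '' z : Set (A.Evt ⊕ B.Evt)) := by
  ext e
  constructor
  · rintro ⟨p, (⟨s, hs, rfl⟩ | ⟨b, hb, rfl⟩), rfl⟩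
    · exact Or.inl ⟨σ s, ⟨s, hs, rfl⟩, rfl⟩
    · exact Or.inr ⟨b, hb, rfl⟩
  · rintro (⟨a, ⟨s, hs, rfl⟩, rfl⟩ | ⟨b, hb, rfl⟩)
    · exact ⟨Sum.inl s, Or.inl ⟨s, hs, rfl⟩, rfl⟩
    · exact ⟨Sum.inr b, Or.inr ⟨b, hb, rfl⟩, rfl⟩

lemma f_image_split {u : Set (S.Evt ⊕ B.Evt)} :
    Sum.map σ id '' u =
      (Sum.inl '' (σ '' (Sum.inl ⁻¹' u)) ∪ Sum.inr '' (Sum.inr ⁻¹' u) : Set (A.Evt ⊕ B.Evt)) := by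
  conv_lhs => rw [← Set.image_preimage_inl_union_image_preimage_inr u]
  exact f_image_union

/-- `Sum.map σ id` sends configurations of `S ∥ B` to configurations of `A ∥ B`. -/
lemma f_config (hσ : IsPreStrategy S A σ) {u : Set (S.Evt ⊕ B.Evt)}
    (hu : (S.toES.par B.toES).Config u) :
    (A.toES.par B.toES).Config (Sum.map σ id '' u) := by
  rw [show (Sum.map σ id '' u : Set ((A.toES.par B.toES).Evt)) = _ from f_image_split]
  rcases par_config_iff.mp hu with ⟨h1, h2⟩
  exact par_config_union (hσ.1.1 _ h1) h2

/-- `Sum.map σ id` is injective on configurations of `S ∥ B`. -/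
lemma f_inj (hσ : IsPreStrategy S A σ) {u : Set (S.Evt ⊕ B.Evt)}
    (hu : (S.toES.par B.toES).Config u) : Set.InjOn (Sum.map σ id) u := by
  rcases par_config_iff.mp hu with ⟨h1, h2⟩
  rintro (s | b) hp (s' | b') hq he
  · simp only [Sum.map_inl, Sum.inl.injEq] at he
    exact congrArg Sum.inl (hσ.1.2 _ h1 hp hq he)
  · simp at he
  · simp at he
  · simp only [Sum.map_inr, Sum.inr.injEq, id] at he
    exact congrArg Sum.inr he

/-- Functionality of a secured bijection. -/
lemma secbij_fun (hτ : IsPreStrategy T (A.dual.par B) τ)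
    {G0 : Set ((S.Evt ⊕ B.Evt) × T.Evt)}
    (hb : IsSecBij (S.toES.par B.toES) T.toES (A.toES.par B.toES) (Sum.map σ id) τ G0)
    {c c' : (S.Evt ⊕ B.Evt) × T.Evt} (hc : c ∈ G0) (hc' : c' ∈ G0) (h : c.1 = c'.1) :
    c = c' := by
  have h1 : τ c.2 = τ c'.2 := by
    rw [← hb.2.2.1 c hc, ← hb.2.2.1 c' hc', h]
  have h2 : c.2 = c'.2 :=
    tau_inj hτ hb.2.1 ⟨c, hc, rfl⟩ ⟨c', hc', rfl⟩ h1
  exact Prod.ext h h2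

lemma secbij_cofun (hσ : IsPreStrategy S A σ)
    {G0 : Set ((S.Evt ⊕ B.Evt) × T.Evt)}
    (hb : IsSecBij (S.toES.par B.toES) T.toES (A.toES.par B.toES) (Sum.map σ id) τ G0)
    {c c' : (S.Evt ⊕ B.Evt) × T.Evt} (hc : c ∈ G0) (hc' : c' ∈ G0) (h : c.2 = c'.2) :
    c = c' := by
  have h1 : Sum.map σ id c.1 = Sum.map σ id c'.1 := by
    rw [hb.2.2.1 c hc, hb.2.2.1 c' hc', h]
  have h2 : c.1 = c'.1 :=
    f_inj hσ hb.1 ⟨c, hc, rfl⟩ ⟨c', hc', rfl⟩ h1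
  exact Prod.ext h2 h

/-- A subset of a secured bijection, closed under the securing relation, is
again a secured bijection. -/
lemma secbij_subset (hσ : IsPreStrategy S A σ) (hτ : IsPreStrategy T (A.dual.par B) τ)
    {G0 H : Set ((S.Evt ⊕ B.Evt) × T.Evt)}
    (hb : IsSecBij (S.toES.par B.toES) T.toES (A.toES.par B.toES) (Sum.map σ id) τ G0)
    (hsub : H ⊆ G0)
    (hcl : ∀ c c', gRel (S.toES.par B.toES) T.toES G0 c c' → c' ∈ H → c ∈ H) :
    IsSecBij (S.toES.par B.toES) T.toES (A.toES.par B.toES) (Sum.map σ id) τ H := by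
  have hfst : (S.toES.par B.toES).Config (Prod.fst '' H) := by
    refine config_subset hb.1 (Set.image_mono hsub) ?_
    rintro e ⟨c, hcH, rfl⟩ e' hle
    have he' : e' ∈ Prod.fst '' G0 := config_down hb.1 ⟨c, hsub hcH, rfl⟩ hle
    obtain ⟨c', hc', hc'e⟩ := he'
    by_cases heq : e' = c.1
    · exact ⟨c, hcH, heq.symm⟩
    · have : c' ∈ H := by
        refine hcl c' c ⟨hc', hsub hcH, Or.inl ⟨?_, ?_⟩⟩ hcH
        · rw [hc'e]; exact hle
        · rw [hc'e]; exact heq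
      exact ⟨c', this, hc'e⟩
  have hsnd : T.toES.Config (Prod.snd '' H) := by
    refine config_subset hb.2.1 (Set.image_mono hsub) ?_
    rintro e ⟨c, hcH, rfl⟩ e' hle
    have he' : e' ∈ Prod.snd '' G0 := config_down hb.2.1 ⟨c, hsub hcH, rfl⟩ hle
    obtain ⟨c', hc', hc'e⟩ := he'
    by_cases heq : e' = c.2
    · exact ⟨c, hcH, heq.symm⟩
    · have : c' ∈ H := by
        refine hcl c' c ⟨hc', hsub hcH, Or.inr ⟨?_, ?_⟩⟩ hcH
        · rw [hc'e]; exact hle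
        · rw [hc'e]; exact heq
      exact ⟨c', this, hc'e⟩
  refine ⟨hfst, hsnd, fun c hc => hb.2.2.1 c (hsub hc), ?_, ?_, ?_⟩
  · rintro p ⟨c1, hc1, rfl⟩ t ⟨c2, hc2, rfl⟩ hft
    have hmem : (c1.1, c2.2) ∈ G0 :=
      hb.2.2.2.1 c1.1 ⟨c1, hsub hc1, rfl⟩ c2.2 ⟨c2, hsub hc2, rfl⟩ hft
    have : c1 = (c1.1, c2.2) := secbij_fun hτ hb (hsub hc1) hmem rfl
    rw [← this]
    exact hc1
  · ext a
    constructor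
    · rintro ⟨p, ⟨c1, hc1, rfl⟩, rfl⟩
      exact ⟨c1.2, ⟨c1, hc1, rfl⟩, (hb.2.2.1 c1 (hsub hc1)).symm⟩
    · rintro ⟨t, ⟨c1, hc1, rfl⟩, rfl⟩
      exact ⟨c1.1, ⟨c1, hc1, rfl⟩, hb.2.2.1 c1 (hsub hc1)⟩
  · intro p q h1 h2
    have hmono : ∀ a b, gRel (S.toES.par B.toES) T.toES H a b →
        gRel (S.toES.par B.toES) T.toES G0 a b :=
      fun a b ⟨ha, hbb, h⟩ => ⟨hsub ha, hsub hbb, h⟩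
    exact hb.2.2.2.2.2 p q (ReflTransGen.mono hmono _ _ h1) (ReflTransGen.mono hmono _ _ h2)

/-- The prime generated by an element of a secured bijection. -/
lemma prime_down (hσ : IsPreStrategy S A σ) (hτ : IsPreStrategy T (A.dual.par B) τ)
    {G0 : Set ((S.Evt ⊕ B.Evt) × T.Evt)}
    (hb : IsSecBij (S.toES.par B.toES) T.toES (A.toES.par B.toES) (Sum.map σ id) τ G0)
    {c : (S.Evt ⊕ B.Evt) × T.Evt} (hc : c ∈ G0) :
    IsSecBij (S.toES.par B.toES) T.toES (A.toES.par B.toES) (Sum.map σ id) τ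
      {c' ∈ G0 | ReflTransGen (gRel (S.toES.par B.toES) T.toES G0) c' c} ∧
    IsPrime (S.toES.par B.toES) T.toES
      {c' ∈ G0 | ReflTransGen (gRel (S.toES.par B.toES) T.toES G0) c' c} := by
  set Pc := {c' ∈ G0 | ReflTransGen (gRel (S.toES.par B.toES) T.toES G0) c' c} with hPc
  have hsub : Pc ⊆ G0 := fun a ha => ha.1
  have hrtg : ∀ {a}, ReflTransGen (gRel (S.toES.par B.toES) T.toES G0) a c →
      a ∈ G0 → ReflTransGen (gRel (S.toES.par B.toES) T.toES Pc) a c := by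
    intro a h
    induction h using Relation.ReflTransGen.head_induction_on with
    | refl => intro _; exact ReflTransGen.refl
    | head hab hbc ih =>
      rename_i a' b'
      intro ha'
      have hb'G : b' ∈ G0 := hab.2.1
      have hb'P : b' ∈ Pc := ⟨hb'G, hbc⟩
      have ha'P : a' ∈ Pc := ⟨ha', ReflTransGen.head hab hbc⟩
      exact ReflTransGen.head ⟨ha'P, hb'P, hab.2.2⟩ (ih hb'G)
  constructor
  · refine secbij_subset hσ hτ hb hsub ?_
    rintro a b hab ⟨hbG, hbc⟩
    exact ⟨hab.1, ReflTransGen.head hab hbc⟩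
  · refine ⟨c, ⟨hc, ReflTransGen.refl⟩, ?_⟩
    rintro q ⟨hqG, hqc⟩
    exact hrtg hqc hqG

end Main2
end DLF
namespace DLF
open Relation Set

/-- The full matching graph of a matching triple of configurations. -/
def MG {S A B T : ESP} (σ : S.Evt → A.Evt) (τ : T.Evt → A.Evt ⊕ B.Evt)
    (x : Set S.Evt) (y : Set T.Evt) (z : Set B.Evt) : Set ((S.Evt ⊕ B.Evt) × T.Evt) :=
  {p | p.1 ∈ Sum.inl '' x ∪ Sum.inr '' z ∧ p.2 ∈ y ∧ Sum.map σ id p.1 = τ p.2}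

section Main3

variable {S A B T : ESP} {σ : S.Evt → A.Evt} {τ : T.Evt → A.Evt ⊕ B.Evt}
variable {x : Set S.Evt} {y : Set T.Evt} {z : Set B.Evt}

lemma zdet (hm : (Sum.inl '' (σ '' x) ∪ Sum.inr '' z : Set (A.Evt ⊕ B.Evt)) = τ '' y) :
    z = Sum.inr ⁻¹' (τ '' y) := by
  rw [← hm, Set.preimage_union, Set.preimage_inr_image_inl,
    Set.preimage_image_eq z Sum.inr_injective]
  simp

lemma MG_fst (hm : (Sum.inl '' (σ '' x) ∪ Sum.inr '' z : Set (A.Evt ⊕ B.Evt)) = τ '' y) :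
    Prod.fst '' MG σ τ x y z = Sum.inl '' x ∪ Sum.inr '' z := by
  ext p
  constructor
  · rintro ⟨c, ⟨h1, _, _⟩, rfl⟩
    exact h1
  · intro hp
    have : Sum.map σ id p ∈ τ '' y := by
      rw [← hm]
      rcases hp with ⟨s, hs, rfl⟩ | ⟨b, hb, rfl⟩
      · exact Or.inl ⟨σ s, ⟨s, hs, rfl⟩, rfl⟩
      · exact Or.inr ⟨b, hb, rfl⟩
    obtain ⟨t, hty, ht⟩ := this
    exact ⟨(p, t), ⟨hp, hty, ht.symm⟩, rfl⟩

lemma MG_snd (hm : (Sum.inl '' (σ '' x) ∪ Sum.inr '' z : Set (A.Evt ⊕ B.Evt)) = τ '' y) :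
    Prod.snd '' MG σ τ x y z = y := by
  ext t
  constructor
  · rintro ⟨c, ⟨_, h2, _⟩, rfl⟩
    exact h2
  · intro ht
    have : τ t ∈ (Sum.inl '' (σ '' x) ∪ Sum.inr '' z : Set (A.Evt ⊕ B.Evt)) := by
      rw [hm]; exact ⟨t, ht, rfl⟩
    rcases this with ⟨a, ⟨s, hs, rfl⟩, ha⟩ | ⟨b, hb, hbeq⟩
    · exact ⟨(Sum.inl s, t), ⟨Or.inl ⟨s, hs, rfl⟩, ht, by simpa using ha⟩, rfl⟩
    · exact ⟨(Sum.inr b, t), ⟨Or.inr ⟨b, hb, rfl⟩, ht, by simpa using hbeq⟩, rfl⟩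

lemma MG_fin (hx : S.toES.Config x) (hy : T.toES.Config y) (hz : B.toES.Config z) :
    (MG σ τ x y z).Finite := by
  have h1 : MG σ τ x y z ⊆ (Sum.inl '' x ∪ Sum.inr '' z) ×ˢ y := by
    rintro c ⟨h1, h2, _⟩
    exact ⟨h1, h2⟩
  exact Set.Finite.subset (Set.Finite.prod ((hx.1.image _).union (hz.1.image _)) hy.1) h1

lemma MG_bij (hS : S.toES.IsES) (hB : B.toES.IsES) (hT : T.toES.IsES)
    (hσ : IsPreStrategy S A σ) (hτ : IsPreStrategy T (A.dual.par B) τ)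
    (hτA : ∀ t t' a a', T.le t t' → τ t = Sum.inl a → τ t' = Sum.inl a' → A.le a a')
    (hx : S.toES.Config x) (hy : T.toES.Config y) (hz : B.toES.Config z)
    (hm : (Sum.inl '' (σ '' x) ∪ Sum.inr '' z : Set (A.Evt ⊕ B.Evt)) = τ '' y) :
    IsSecBij (S.toES.par B.toES) T.toES (A.toES.par B.toES) (Sum.map σ id) τ
      (MG σ τ x y z) := by
  refine ⟨?_, ?_, ?_, ?_, ?_, ?_⟩
  · have h : (S.toES.par B.toES).Config
        ((Prod.fst '' MG σ τ x y z : Set (S.Evt ⊕ B.Evt))) := by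
      rw [MG_fst hm]; exact par_config_union hx hz
    exact h
  · have h : T.toES.Config ((Prod.snd '' MG σ τ x y z : Set T.Evt)) := by
      rw [MG_snd hm]; exact hy
    exact h
  · rintro c ⟨_, _, h⟩
    exact h
  · rintro p ⟨c1, hc1, rfl⟩ t ⟨c2, hc2, rfl⟩ hft
    exact ⟨hc1.1, hc2.2.1, hft⟩
  · ext a
    constructor
    · rintro ⟨p, ⟨c, hc, rfl⟩, rfl⟩
      exact ⟨c.2, ⟨c, hc, rfl⟩, hc.2.2.symm⟩
    · rintro ⟨t, ⟨c, hc, rfl⟩, rfl⟩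
      exact ⟨c.1, ⟨c, hc, rfl⟩, hc.2.2⟩
  · exact part1 hS hB hT hσ hτ hτA x y z hx hy hz

/-- The graph of a prime of the interaction, contained in a secured bijection
`G0`, is closed under the securing relation of `G0`. -/
lemma evt_closed (hσ : IsPreStrategy S A σ) (hτ : IsPreStrategy T (A.dual.par B) τ)
    {G0 : Set ((S.Evt ⊕ B.Evt) × T.Evt)}
    (hb : IsSecBij (S.toES.par B.toES) T.toES (A.toES.par B.toES) (Sum.map σ id) τ G0)
    (e : (InterTS S A B T σ τ).Evt) (he : e.val ⊆ G0) :
    ∀ c c', gRel (S.toES.par B.toES) T.toES G0 c c' → c' ∈ e.val → c ∈ e.val := by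
  rintro c c' ⟨hcG, hc'G, h | h⟩ hc'e
  · have h1 : c.1 ∈ Prod.fst '' e.val := config_down e.2.1.1 ⟨c', hc'e, rfl⟩ h.1
    obtain ⟨c2, hc2, hc2e⟩ := h1
    have : c2 = c := secbij_fun hτ hb (he hc2) hcG hc2e
    rw [← this]
    exact hc2
  · have h1 : c.2 ∈ Prod.snd '' e.val := config_down e.2.1.2.1 ⟨c', hc'e, rfl⟩ h.1
    obtain ⟨c2, hc2, hc2e⟩ := h1
    have : c2 = c := secbij_cofun hσ hb (he hc2) hcG hc2e
    rw [← this]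
    exact hc2

lemma rtg_closed {P T' : ES} {G0 H : Set (P.Evt × T'.Evt)}
    (hcl : ∀ c c', gRel P T' G0 c c' → c' ∈ H → c ∈ H) :
    ∀ {a b}, ReflTransGen (gRel P T' G0) a b → b ∈ H → a ∈ H := by
  intro a b h
  induction h using Relation.ReflTransGen.head_induction_on with
  | refl => exact id
  | head hab hbc ih => intro hbH; exact hcl _ _ hab (ih hbH)

lemma union_secbij (hσ : IsPreStrategy S A σ) (hτ : IsPreStrategy T (A.dual.par B) τ)
    {G0 : Set ((S.Evt ⊕ B.Evt) × T.Evt)}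
    (hb : IsSecBij (S.toES.par B.toES) T.toES (A.toES.par B.toES) (Sum.map σ id) τ G0)
    (W : Set (InterTS S A B T σ τ).Evt) (hW : ∀ e ∈ W, e.val ⊆ G0) :
    IsSecBij (S.toES.par B.toES) T.toES (A.toES.par B.toES) (Sum.map σ id) τ
      (⋃ e ∈ W, e.val) := by
  refine secbij_subset hσ hτ hb ?_ ?_
  · exact Set.iUnion₂_subset hW
  · intro c c' hstep hc'
    replace hc' := Set.mem_iUnion₂.mp hc'; refine Set.mem_iUnion₂.mpr ?_
    obtain ⟨e, heW, hc'e⟩ := hc'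
    exact ⟨e, heW, evt_closed hσ hτ hb e (hW e heW) c c' hstep hc'e⟩

/-- The backwards map is a configuration of the interaction. -/
lemma psi_config (hS : S.toES.IsES) (hB : B.toES.IsES) (hT : T.toES.IsES)
    (hσ : IsPreStrategy S A σ) (hτ : IsPreStrategy T (A.dual.par B) τ)
    (hτA : ∀ t t' a a', T.le t t' → τ t = Sum.inl a → τ t' = Sum.inl a' → A.le a a')
    (hx : S.toES.Config x) (hy : T.toES.Config y) (hz : B.toES.Config z)
    (hm : (Sum.inl '' (σ '' x) ∪ Sum.inr '' z : Set (A.Evt ⊕ B.Evt)) = τ '' y) :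
    (InterTS S A B T σ τ).Config {e | e.val ⊆ MG σ τ x y z} := by
  have hbij := MG_bij hS hB hT hσ hτ hτA hx hy hz hm
  refine ⟨?_, ?_, ?_⟩
  · have h1 : {e : (InterTS S A B T σ τ).Evt | e.val ⊆ MG σ τ x y z} =
        Subtype.val ⁻¹' {H | H ⊆ MG σ τ x y z} := rfl
    rw [h1]
    exact Set.Finite.preimage Subtype.val_injective.injOn
      (Set.Finite.finite_subsets (MG_fin hx hy hz))
  · intro Y hY hYf
    refine ⟨hYf, ?_⟩
    exact union_secbij hσ hτ hbij Y (fun e heY => hY heY)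
  · intro e he e' hle
    exact fun c hc => he (hle hc)

end Main3
end DLF
namespace DLF
open Relation Set

section Main4

variable {S A B T : ESP} {σ : S.Evt → A.Evt} {τ : T.Evt → A.Evt ⊕ B.Evt}

lemma pre_inl {α β : Type} {x : Set α} {z : Set β} :
    Sum.inl ⁻¹' ((Sum.inl '' x ∪ Sum.inr '' z : Set (α ⊕ β))) = x := by
  rw [Set.preimage_union, Set.preimage_image_eq x Sum.inl_injective,
    Set.preimage_inl_image_inr]
  simp

lemma pre_inr {α β : Type} {x : Set α} {z : Set β} :
    Sum.inr ⁻¹' ((Sum.inl '' x ∪ Sum.inr '' z : Set (α ⊕ β))) = z := by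
  rw [Set.preimage_union, Set.preimage_image_eq z Sum.inr_injective,
    Set.preimage_inr_image_inl]
  simp

lemma phi_main (hσ : IsPreStrategy S A σ) (hτ : IsPreStrategy T (A.dual.par B) τ)
    {G0 : Set ((S.Evt ⊕ B.Evt) × T.Evt)}
    (hb : IsSecBij (S.toES.par B.toES) T.toES (A.toES.par B.toES) (Sum.map σ id) τ G0) :
    S.toES.Config (Sum.inl ⁻¹' (Prod.fst '' G0)) ∧
    T.toES.Config (Prod.snd '' G0) ∧
    B.toES.Config (Sum.inr ⁻¹' (Prod.fst '' G0)) ∧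
    (Sum.inl '' (σ '' (Sum.inl ⁻¹' (Prod.fst '' G0))) ∪
      Sum.inr '' (Sum.inr ⁻¹' (Prod.fst '' G0)) : Set (A.Evt ⊕ B.Evt)) =
        τ '' (Prod.snd '' G0) ∧
    G0 = MG σ τ (Sum.inl ⁻¹' (Prod.fst '' G0)) (Prod.snd '' G0)
      (Sum.inr ⁻¹' (Prod.fst '' G0)) := by
  have hfst : (S.toES.par B.toES).Config (Prod.fst '' G0 : Set (S.Evt ⊕ B.Evt)) := hb.1
  obtain ⟨h1, h2⟩ := par_config_iff.mp hfst
  have hsnd : T.toES.Config (Prod.snd '' G0) := hb.2.1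
  have him : Sum.map σ id '' (Prod.fst '' G0 : Set (S.Evt ⊕ B.Evt)) =
      τ '' (Prod.snd '' G0) := hb.2.2.2.2.1
  refine ⟨h1, hsnd, h2, ?_, ?_⟩
  · rw [← f_image_split]
    exact him
  · ext c
    constructor
    · intro hc
      refine ⟨?_, ⟨c, hc, rfl⟩, hb.2.2.1 c hc⟩
      rw [Set.image_preimage_inl_union_image_preimage_inr]
      exact ⟨c, hc, rfl⟩
    · rintro ⟨hp, ht, hft⟩
      have hp' : c.1 ∈ (Prod.fst '' G0 : Set (S.Evt ⊕ B.Evt)) := by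
        rw [← Set.image_preimage_inl_union_image_preimage_inr
          (Prod.fst '' G0 : Set (S.Evt ⊕ B.Evt))]
        exact hp
      have := hb.2.2.2.1 c.1 hp' c.2 ht hft
      exact this

/-- The forward map of the order isomorphism. -/
def PhiFun (hσ : IsPreStrategy S A σ) (hτ : IsPreStrategy T (A.dual.par B) τ) :
    InterTSConfigPoset S A B T σ τ → MatchingPairsPoset S A B T σ τ := fun w =>
  ⟨(Sum.inl ⁻¹' (Prod.fst '' ((⋃ e ∈ w.val, e.val) : Set ((S.Evt ⊕ B.Evt) × T.Evt))),
    Prod.snd '' ((⋃ e ∈ w.val, e.val) : Set ((S.Evt ⊕ B.Evt) × T.Evt))), by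
    have hb := (w.2.2.1 w.val Set.Subset.rfl w.2.1).2
    obtain ⟨hx, hy, hz, hm, _⟩ :=
      phi_main hσ hτ (G0 := ((⋃ e ∈ w.val, e.val) : Set ((S.Evt ⊕ B.Evt) × T.Evt))) hb
    exact ⟨hx, hy, _, hz, hm⟩⟩

/-- The backward map of the order isomorphism. -/
def PsiFun (hS : S.toES.IsES) (hB : B.toES.IsES) (hT : T.toES.IsES)
    (hσ : IsPreStrategy S A σ) (hτ : IsPreStrategy T (A.dual.par B) τ)
    (hτA : ∀ t t' a a', T.le t t' → τ t = Sum.inl a → τ t' = Sum.inl a' → A.le a a') :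
    MatchingPairsPoset S A B T σ τ → InterTSConfigPoset S A B T σ τ := fun p =>
  ⟨{e | e.val ⊆ MG σ τ p.val.1 p.val.2 (Sum.inr ⁻¹' (τ '' p.val.2))}, by
    obtain ⟨hx, hy, z, hz, hm⟩ := p.2
    have hz' : z = Sum.inr ⁻¹' (τ '' p.val.2) := zdet hm
    rw [← hz']
    exact psi_config hS hB hT hσ hτ hτA hx hy hz hm⟩

lemma psi_phi_inv (hS : S.toES.IsES) (hB : B.toES.IsES) (hT : T.toES.IsES)
    (hσ : IsPreStrategy S A σ) (hτ : IsPreStrategy T (A.dual.par B) τ)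
    (hτA : ∀ t t' a a', T.le t t' → τ t = Sum.inl a → τ t' = Sum.inl a' → A.le a a')
    (w : InterTSConfigPoset S A B T σ τ) :
    PsiFun hS hB hT hσ hτ hτA (PhiFun hσ hτ w) = w := by
  apply Subtype.ext
  set G0 : Set ((S.Evt ⊕ B.Evt) × T.Evt) := ((⋃ e ∈ w.val, e.val)) with hG0
  have hb : IsSecBij (S.toES.par B.toES) T.toES (A.toES.par B.toES) (Sum.map σ id) τ G0 :=
    (w.2.2.1 w.val Set.Subset.rfl w.2.1).2
  obtain ⟨hx, hy, hz, hm, hGeq⟩ := phi_main hσ hτ hb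
  have hzz : (Sum.inr ⁻¹' (Prod.fst '' G0) : Set B.Evt) =
      Sum.inr ⁻¹' (τ '' (Prod.snd '' G0)) := zdet hm
  show {e | e.val ⊆ MG σ τ (Sum.inl ⁻¹' (Prod.fst '' G0)) (Prod.snd '' G0)
      (Sum.inr ⁻¹' (τ '' (Prod.snd '' G0)))} = w.val
  rw [← hzz, ← hGeq]
  ext e
  constructor
  · intro hev
    obtain ⟨c, hce, htop⟩ := e.2.2
    have hcG : c ∈ G0 := hev hce
    rw [hG0] at hcG
    replace hcG := Set.mem_iUnion₂.mp hcG
    obtain ⟨e₀, he₀, hce₀⟩ := hcG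
    have he₀sub : e₀.val ⊆ G0 := Set.subset_biUnion_of_mem he₀
    have hcl := evt_closed hσ hτ hb e₀ he₀sub
    have hmono : ∀ a b, gRel (S.toES.par B.toES) T.toES e.val a b →
        gRel (S.toES.par B.toES) T.toES G0 a b :=
      fun a b h => ⟨hev h.1, hev h.2.1, h.2.2⟩
    have hsub : e.val ⊆ e₀.val := by
      intro c' hc'
      exact rtg_closed hcl (ReflTransGen.mono hmono _ _ (htop c' hc')) hce₀
    exact w.2.2.2 e₀ he₀ e hsub
  · intro hew
    show e.val ⊆ G0
    rw [hG0]
    exact Set.subset_biUnion_of_mem hew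

lemma phi_psi_inv (hS : S.toES.IsES) (hB : B.toES.IsES) (hT : T.toES.IsES)
    (hσ : IsPreStrategy S A σ) (hτ : IsPreStrategy T (A.dual.par B) τ)
    (hτA : ∀ t t' a a', T.le t t' → τ t = Sum.inl a → τ t' = Sum.inl a' → A.le a a')
    (p : MatchingPairsPoset S A B T σ τ) :
    PhiFun hσ hτ (PsiFun hS hB hT hσ hτ hτA p) = p := by
  apply Subtype.ext
  obtain ⟨hx, hy, z, hz, hm⟩ := p.2
  have hz' : z = Sum.inr ⁻¹' (τ '' p.val.2) := zdet hm
  set zc : Set B.Evt := Sum.inr ⁻¹' (τ '' p.val.2) with hzc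
  have hzcfg : B.toES.Config zc := hz' ▸ hz
  have hm' : (Sum.inl '' (σ '' p.val.1) ∪ Sum.inr '' zc : Set (A.Evt ⊕ B.Evt)) =
      τ '' p.val.2 := hz' ▸ hm
  have hbij := MG_bij hS hB hT hσ hτ hτA hx hy hzcfg hm'
  -- the union of all primes contained in the full graph is the full graph
  have hunion : ((⋃ e ∈ {e : (InterTS S A B T σ τ).Evt |
      e.val ⊆ MG σ τ p.val.1 p.val.2 zc}, e.val) : Set ((S.Evt ⊕ B.Evt) × T.Evt)) =
      MG σ τ p.val.1 p.val.2 zc := by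
    apply Set.Subset.antisymm
    · exact Set.iUnion₂_subset (fun e he => he)
    · intro c hc
      obtain ⟨hb1, hb2⟩ := prime_down hσ hτ hbij hc
      refine Set.mem_iUnion₂.mpr ?_
      refine ⟨⟨{c' ∈ MG σ τ p.val.1 p.val.2 zc |
        ReflTransGen (gRel (S.toES.par B.toES) T.toES (MG σ τ p.val.1 p.val.2 zc)) c' c},
        hb1, hb2⟩, ?_, ?_⟩
      · exact fun c' hc' => hc'.1
      · exact ⟨hc, ReflTransGen.refl⟩
  have hval : (PsiFun hS hB hT hσ hτ hτA p).val =
      {e : (InterTS S A B T σ τ).Evt | e.val ⊆ MG σ τ p.val.1 p.val.2 zc} := rfl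
  show (Sum.inl ⁻¹' (Prod.fst ''
        ((⋃ e ∈ (PsiFun hS hB hT hσ hτ hτA p).val, e.val) : Set ((S.Evt ⊕ B.Evt) × T.Evt))),
      Prod.snd ''
        ((⋃ e ∈ (PsiFun hS hB hT hσ hτ hτA p).val, e.val) : Set ((S.Evt ⊕ B.Evt) × T.Evt)))
      = p.val
  rw [hval, hunion]
  have e1 : (Prod.fst '' MG σ τ p.val.1 p.val.2 zc : Set (S.Evt ⊕ B.Evt)) =
      Sum.inl '' p.val.1 ∪ Sum.inr '' zc := MG_fst hm'
  have e2 : (Prod.snd '' MG σ τ p.val.1 p.val.2 zc : Set T.Evt) = p.val.2 := MG_snd hm'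
  rw [e1, e2, pre_inl]

lemma phi_mono (hσ : IsPreStrategy S A σ) (hτ : IsPreStrategy T (A.dual.par B) τ)
    {w w' : InterTSConfigPoset S A B T σ τ} (h : w ≤ w') :
    PhiFun hσ hτ w ≤ PhiFun hσ hτ w' := by
  have hval : w.val ⊆ w'.val := h
  have hG : ((⋃ e ∈ w.val, e.val) : Set ((S.Evt ⊕ B.Evt) × T.Evt)) ⊆
      ⋃ e ∈ w'.val, e.val := Set.biUnion_subset_biUnion_left hval
  exact ⟨Set.preimage_mono (Set.image_mono hG), Set.image_mono hG⟩

lemma psi_mono (hS : S.toES.IsES) (hB : B.toES.IsES) (hT : T.toES.IsES)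
    (hσ : IsPreStrategy S A σ) (hτ : IsPreStrategy T (A.dual.par B) τ)
    (hτA : ∀ t t' a a', T.le t t' → τ t = Sum.inl a → τ t' = Sum.inl a' → A.le a a')
    {p p' : MatchingPairsPoset S A B T σ τ} (h : p ≤ p') :
    PsiFun hS hB hT hσ hτ hτA p ≤ PsiFun hS hB hT hσ hτ hτA p' := by
  have hval : p.val ≤ p'.val := h
  rw [Prod.le_def] at hval
  obtain ⟨h1, h2⟩ := hval
  have hMG : MG σ τ p.val.1 p.val.2 (Sum.inr ⁻¹' (τ '' p.val.2)) ⊆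
      MG σ τ p'.val.1 p'.val.2 (Sum.inr ⁻¹' (τ '' p'.val.2)) := by
    rintro ⟨cp, ct⟩ ⟨hc1, hc2, hc3⟩
    refine ⟨?_, h2 hc2, hc3⟩
    rcases hc1 with ⟨s, hs, rfl⟩ | ⟨b, hbm, rfl⟩
    · exact Or.inl ⟨s, h1 hs, rfl⟩
    · exact Or.inr ⟨b, Set.preimage_mono (Set.image_mono h2) hbm, rfl⟩
  intro e he
  exact fun c hc => hMG (he hc)

end Main4
end DLF

/-- deadlock-free lemma: if `τ : T → A^⊥ ∥ B` preserves
causality between events sent to the `A^⊥` component, then for any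
pre-strategy `σ : S → A` and matching configurations `σ x ∥ z = τ y`, the
induced bijection `x ∥ z ≃ y` is secured; consequently
`C(T ⊛ S) ≅ {(x, y) ∈ C(S) × C(T) | σ x ∥ z = τ y for some z ∈ C(B)}`
as partial orders. -/
theorem deadlock_free
    (S A B T : ESP) (hS : S.toES.IsES) (hA : A.toES.IsES) (hB : B.toES.IsES)
    (hT : T.toES.IsES)
    (σ : S.Evt → A.Evt) (τ : T.Evt → A.Evt ⊕ B.Evt)
    (hσ : IsPreStrategy S A σ) (hτ : IsPreStrategy T (A.dual.par B) τ)
    (hτA : ∀ t t' a a', T.le t t' → τ t = Sum.inl a → τ t' = Sum.inl a' →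
      A.le a a') :
    (∀ (x : Set S.Evt) (y : Set T.Evt) (z : Set B.Evt),
      S.toES.Config x → T.toES.Config y → B.toES.Config z →
      (Sum.inl '' (σ '' x) ∪ Sum.inr '' z : Set (A.Evt ⊕ B.Evt)) = τ '' y →
      SecuredOn (S.toES.par B.toES) T.toES
        {p : (S.Evt ⊕ B.Evt) × T.Evt |
          p.1 ∈ Sum.inl '' x ∪ Sum.inr '' z ∧ p.2 ∈ y ∧
          Sum.map σ id p.1 = τ p.2}) ∧
    Nonempty (InterTSConfigPoset S A B T σ τ ≃o MatchingPairsPoset S A B T σ τ) := by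
  constructor
  · intro x y z hx hy hz _hm
    exact DLF.part1 hS hB hT hσ hτ hτA x y z hx hy hz
  · refine ⟨⟨⟨DLF.PhiFun hσ hτ, DLF.PsiFun hS hB hT hσ hτ hτA,
      DLF.psi_phi_inv hS hB hT hσ hτ hτA, DLF.phi_psi_inv hS hB hT hσ hτ hτA⟩, ?_⟩⟩
    intro a b
    constructor
    · intro h
      have h' : DLF.PhiFun hσ hτ a ≤ DLF.PhiFun hσ hτ b := h
      have h2 := DLF.psi_mono hS hB hT hσ hτ hτA h'
      rwa [DLF.psi_phi_inv, DLF.psi_phi_inv] at h2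
    · exact fun h => DLF.phi_mono hσ hτ h
end

section
/- (Scott order) Let A be an esp and x, y ∈ C(A). The following are equivalent: (i) y ∥ x ∈ C(CC_A); (ii) x ⊇⁻ (x ∩ y) ⊆⁺ y; (iii) there exists z ∈ C(A) with x ⊇⁻ z ⊆⁺ y. Moreover the relation x ⊑_A y defined by these equivalent conditions is a partial order on C(A). -/
/-- Scott order: for configurations `x, y ∈ C(A)` the following
are equivalent: (i) `y ∥ x ∈ C(CC_A)`; (ii) `x ⊇⁻ (x ∩ y) ⊆⁺ y`;
(iii) there is `z ∈ C(A)` with `x ⊇⁻ z ⊆⁺ y`. Moreover the resulting relation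
`⊑_A` is a partial order on `C(A)`. -/
theorem scott_order
    (A : ESP) (hA : A.toES.IsES) :
    (∀ x y, A.toES.Config x → A.toES.Config y →
      (((CC A).toES.Config (Sum.inl '' y ∪ Sum.inr '' x) ↔ scottLE A.pol x y) ∧
       (scottLE A.pol x y ↔
         ∃ z, A.toES.Config z ∧ polExt A.pol false z x ∧ polExt A.pol true z y))) ∧
    (∀ x, A.toES.Config x → scottLE A.pol x x) ∧
    (∀ x y, A.toES.Config x → A.toES.Config y →
      scottLE A.pol x y → scottLE A.pol y x → x = y) ∧
    (∀ x y z, A.toES.Config x → A.toES.Config y → A.toES.Config z →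
      scottLE A.pol x y → scottLE A.pol y z → scottLE A.pol x z) := by

  have key : ∀ x y : Set A.Evt, scottLE A.pol x y ↔
      ((∀ a ∈ x, A.pol a = true → a ∈ y) ∧ (∀ a ∈ y, A.pol a = false → a ∈ x)) := by
    intro x y
    constructor
    · rintro ⟨⟨-, h1⟩, ⟨-, h2⟩⟩
      refine ⟨fun a ha hp => ?_, fun a ha hp => ?_⟩
      · by_contra hn
        have := h1 a ha (fun h => hn h.2)
        simp [this] at hp
      · by_contra hn
        have := h2 a ha (fun h => hn h.1)
        simp [this] at hp
    · rintro ⟨h1, h2⟩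
      refine ⟨⟨Set.inter_subset_left, fun a ha hna => ?_⟩,
             ⟨Set.inter_subset_right, fun a ha hna => ?_⟩⟩
      · cases hb : A.pol a with
        | false => rfl
        | true => exact absurd ⟨ha, h1 a ha hb⟩ hna
      · cases hb : A.pol a with
        | false => exact absurd ⟨h2 a ha hb, ha⟩ hna
        | true => rfl
  refine ⟨?_, ?_, ?_, ?_⟩
  · intro x y hx hy
    constructor
    · constructor
      · rintro ⟨hf, hc, hdown⟩
        rw [key]
        constructor
        · intro a ha hp
          have h1 : (Sum.inr a : A.Evt ⊕ A.Evt) ∈ Sum.inl '' y ∪ Sum.inr '' x :=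
            Or.inr ⟨a, ha, rfl⟩
          have h2 := hdown _ h1 (Sum.inl a)
            (Relation.ReflTransGen.single (Or.inr (Or.inl ⟨a, hp, rfl, rfl⟩)))
          rcases h2 with ⟨b, hb, hba⟩ | ⟨b, hb, hba⟩
          · cases hba; exact hb
          · exact absurd hba (by simp)
        · intro a ha hp
          have h1 : (Sum.inl a : A.Evt ⊕ A.Evt) ∈ Sum.inl '' y ∪ Sum.inr '' x :=
            Or.inl ⟨a, ha, rfl⟩
          have h2 := hdown _ h1 (Sum.inr a)
            (Relation.ReflTransGen.single (Or.inr (Or.inr ⟨a, hp, rfl, rfl⟩)))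
          rcases h2 with ⟨b, hb, hba⟩ | ⟨b, hb, hba⟩
          · exact absurd hba (by simp)
          · cases hba; exact hb
      · intro hxy
        rw [key] at hxy
        obtain ⟨h1, h2⟩ := hxy
        set w : Set (A.Evt ⊕ A.Evt) := Sum.inl '' y ∪ Sum.inr '' x with hw
        have hstep : ∀ p q : A.Evt ⊕ A.Evt, ccGen A p q → q ∈ w → p ∈ w := by
          rintro p q (hle | ⟨a, hp, rfl, rfl⟩ | ⟨a, hp, rfl, rfl⟩) hq
          · match p, q, hle with
            | Sum.inl a, Sum.inl b, hle =>
              rcases hq with ⟨c, hc, hcb⟩ | ⟨c, hc, hcb⟩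
              · cases hcb; exact Or.inl ⟨a, hy.2.2 _ hc _ hle, rfl⟩
              · exact absurd hcb (by simp)
            | Sum.inr a, Sum.inr b, hle =>
              rcases hq with ⟨c, hc, hcb⟩ | ⟨c, hc, hcb⟩
              · exact absurd hcb (by simp)
              · cases hcb; exact Or.inr ⟨a, hx.2.2 _ hc _ hle, rfl⟩
          · rcases hq with ⟨c, hc, hcb⟩ | ⟨c, hc, hcb⟩
            · exact absurd hcb (by simp)
            · cases hcb; exact Or.inl ⟨a, h1 a hc hp, rfl⟩
          · rcases hq with ⟨c, hc, hcb⟩ | ⟨c, hc, hcb⟩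
            · cases hcb; exact Or.inr ⟨a, h2 a hc hp, rfl⟩
            · exact absurd hcb (by simp)
        have hdc : ∀ p q : A.Evt ⊕ A.Evt, Relation.ReflTransGen (ccGen A) p q →
            q ∈ w → p ∈ w := by
          intro p q h
          induction h with
          | refl => exact id
          | tail hpq hqr ih => exact fun hm => ih (hstep _ _ hqr hm)
        refine ⟨(hy.1.image _).union (hx.1.image _), ?_, fun e he e' hle => hdc _ _ hle he⟩
        intro Y hY hYf
        have hDw : {e | ∃ e' ∈ Y, Relation.ReflTransGen (ccGen A) e e'} ⊆ w := by
          rintro e ⟨e', he', hle⟩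
          exact hdc _ _ hle (hY he')
        refine ⟨?_, ?_⟩
        · have hsub : Sum.inl ⁻¹' {e | ∃ e' ∈ Y, Relation.ReflTransGen (ccGen A) e e'} ⊆ y := by
            intro a ha
            rcases hDw ha with ⟨c, hc, hcb⟩ | ⟨c, hc, hcb⟩
            · cases hcb; exact hc
            · exact absurd hcb (by simp)
          exact hy.2.1 _ hsub (hy.1.subset hsub)
        · have hsub : Sum.inr ⁻¹' {e | ∃ e' ∈ Y, Relation.ReflTransGen (ccGen A) e e'} ⊆ x := by
            intro a ha
            rcases hDw ha with ⟨c, hc, hcb⟩ | ⟨c, hc, hcb⟩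
            · exact absurd hcb (by simp)
            · cases hcb; exact hc
          exact hx.2.1 _ hsub (hx.1.subset hsub)
    · constructor
      · intro h
        refine ⟨x ∩ y, ⟨hx.1.subset Set.inter_subset_left, ?_, ?_⟩, h.1, h.2⟩
        · intro Y hY hYf
          exact hx.2.1 _ (hY.trans Set.inter_subset_left) hYf
        · intro e he e' hle
          exact ⟨hx.2.2 _ he.1 _ hle, hy.2.2 _ he.2 _ hle⟩
      · rintro ⟨z, hz, ⟨hzx, hnegx⟩, ⟨hzy, hposy⟩⟩
        rw [key]
        constructor
        · intro a ha hp
          by_cases haz : a ∈ z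
          · exact hzy haz
          · simp [hnegx a ha haz] at hp
        · intro a ha hp
          by_cases haz : a ∈ z
          · exact hzx haz
          · simp [hposy a ha haz] at hp
  · intro x hx
    rw [key]
    exact ⟨fun a ha _ => ha, fun a ha _ => ha⟩
  · intro x y hx hy hxy hyx
    rw [key] at hxy hyx
    ext a
    constructor
    · intro ha
      cases hb : A.pol a with
      | false => exact hyx.2 a ha hb
      | true => exact hxy.1 a ha hb
    · intro ha
      cases hb : A.pol a with
      | false => exact hxy.2 a ha hb
      | true => exact hyx.1 a ha hb
  · intro x y z hx hy hz hxy hyz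
    rw [key] at hxy hyz ⊢
    constructor
    · intro a ha hp
      by_cases hay : a ∈ y
      · exact hyz.1 a hay hp
      · exact absurd (hxy.1 a ha hp) hay
    · intro a ha hp
      by_cases hay : a ∈ y
      · exact hxy.2 a hay hp
      · exact absurd (hyz.2 a ha hp) hay
end

section
/- Let σ : S → A be a pre-strategy and let φ : x ∥ y ≃ σx ∥ y be a secured bijection corresponding to a configuration of CC_A ⊛ S (so x ∈ C(S), y ∈ C(A) and σx ∥ y ∈ C(CC_A)). The following are equivalent: (i) all maximal events of φ (in its induced order) are visible, i.e. project to the right-hand copy of A; (ii) every maximal event s of x is positive and σs ∈ y. Moreover, in this case, if σ is courteous then σx ⊆⁻ y. -/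
/-- The interaction `CC_A ⊛ S`: the pullback of `σ ∥ id_A : S ∥ A → A ∥ A`
and `ccc_A = id : CC_A → A ∥ A` (polarities ignored). -/
def ccInterES (A S : ESP) (σ : S.Evt → A.Evt) : ES :=
  Interaction (S.toES.par A.toES) (CC A).toES (A.toES.par A.toES)
    (Sum.map σ id) id

/-- The graph of the bijection `x ∥ y ≃ σ x ∥ y` determined by a pair of
configurations `(x, y) ∈ C(S) × C(A)` (the secured bijection `Ψ⁻¹(x, y)`). -/
def ccGraph (A S : ESP) (σ : S.Evt → A.Evt) (xS : Set S.Evt) (xA : Set A.Evt) :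
    Set ((S.Evt ⊕ A.Evt) × (A.Evt ⊕ A.Evt)) :=
  {p | p.1 ∈ Sum.inl '' xS ∪ Sum.inr '' xA ∧ p.2 = Sum.map σ id p.1}

/-- All maximal events of the graph `G` (for its induced order) are visible,
i.e. project to the right-hand copy of `A`. -/
def MaxVis (A S : ESP) (σ : S.Evt → A.Evt)
    (G : Set ((S.Evt ⊕ A.Evt) × (A.Evt ⊕ A.Evt))) : Prop :=
  ∀ p ∈ G, (∀ q ∈ G, Relation.ReflTransGen
      (gRel (S.toES.par A.toES) (CC A).toES G) p q → q = p) →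
    ∃ a : A.Evt, p.1 = Sum.inr a

/-!
An invisible event `(s, σ s)` of `φ` can only be followed, in the order of `φ`, either by an
event above `s` in `x`, or through the copycat link `σ s → σ s` from the left to the right copy
of `A` (for `σ s` positive and in `y`): a copycat chain leaving `σ s` that reaches another event
of `σ x` would, since maps of event structures reflect causality on configurations, lead above
`s`. For the second part, an `s ∈ x` maximal among those with `σ s ∉ y` cannot be maximal in `x`,
nor negative (copycat puts `σ s` into `y`); courtesy then sends `s ⇢ v` to `σ s ≤ σ v ∈ y`.
Positive events of `y` lie in `σ x` by copycat again.
-/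

open Relation

namespace ES

variable {E F : ES}

abbrev IsES.partialOrder (hE : E.IsES) : PartialOrder E.Evt where
  le := E.le
  lt := E.lt
  le_refl := hE.1
  le_trans := hE.2.1
  le_antisymm := hE.2.2.1
  lt_iff_le_not_ge a b :=
    ⟨fun ⟨hab, hne⟩ => ⟨hab, fun hba => hne (hE.2.2.1 a b hab hba)⟩,
      fun ⟨hab, hba⟩ => ⟨hab, by rintro rfl; exact hba hab⟩⟩

lemma Config.sep_le (hE : E.IsES) {x : Set E.Evt} (hx : E.Config x) (e : E.Evt) :
    E.Config {u ∈ x | E.le u e} :=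
  ⟨hx.1.subset fun _ hu => hu.1, fun Y hY hYf => hx.2.1 Y (fun _ hu => (hY hu).1) hYf,
    fun _ hu u' hu' => ⟨hx.2.2 _ hu.1 u' hu', hE.2.1 _ _ _ hu' hu.2⟩⟩

lemma exists_imc_of_lt (hE : E.IsES) {x : Set E.Evt} (hx : E.Config x) {s t : E.Evt}
    (ht : t ∈ x) (hst : E.lt s t) : ∃ v ∈ x, E.imc s v := by
  let := hE.partialOrder
  obtain ⟨v, ⟨hv, hsv⟩, hvmin⟩ :=
    (hx.1.subset fun _ hu => hu.1 : {u ∈ x | s < u}.Finite).exists_minimal ⟨t, ht, hst⟩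
  refine ⟨v, hv, hsv, fun c hsc hcv => or_iff_not_imp_left.2 fun hcs => ?_⟩
  exact Minimal.eq_of_le ⟨⟨hv, hsv⟩, hvmin⟩ ⟨hx.2.2 v hv c hcv, lt_of_le_of_ne hsc (Ne.symm hcs)⟩
    hcv

end ES

namespace IsMap

variable {E F : ES} {f : E.Evt → F.Evt} {x : Set E.Evt}

lemma le_of_le (hE : E.IsES) (hf : IsMap E F f) (hx : E.Config x) {s s' : E.Evt}
    (hs : s ∈ x) (hs' : s' ∈ x) (h : F.le (f s) (f s')) : E.le s s' := by
  have hz := hf.1 _ (hx.sep_le hE s')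
  obtain ⟨u, ⟨hu, hus'⟩, hus⟩ := hz.2.2 (f s') ⟨s', ⟨hs', hE.1 s'⟩, rfl⟩ (f s) h
  rwa [← hf.2 x hx hu hs hus]

lemma map_maximal (hE : E.IsES) (hf : IsMap E F f) (hx : E.Config x) {s : E.Evt} (hs : s ∈ x)
    (hmax : ∀ s' ∈ x, E.le s s' → s' = s) : ∀ a ∈ f '' x, F.le (f s) a → a = f s := by
  rintro _ ⟨s', hs', rfl⟩ h
  rw [hmax s' hs' (hf.le_of_le hE hx hs hs' h)]

end IsMap

section SumImage

variable {α β : Type*} {u : Set α} {v : Set β}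

@[simp] lemma inl_mem_image_inl_union {a : α} :
    (Sum.inl a : α ⊕ β) ∈ Sum.inl '' u ∪ Sum.inr '' v ↔ a ∈ u := by
  simp [Sum.inl_injective.mem_set_image]

@[simp] lemma inr_mem_image_inl_union {b : β} :
    (Sum.inr b : α ⊕ β) ∈ Sum.inl '' u ∪ Sum.inr '' v ↔ b ∈ v := by
  simp [Sum.inr_injective.mem_set_image]

end SumImage

namespace CC

variable {A : ESP} {u v : Set A.Evt} {a : A.Evt}

lemma neg_mem_right (h : (CC A).Config (Sum.inl '' u ∪ Sum.inr '' v)) (ha : a ∈ u)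
    (hneg : A.pol a = false) : a ∈ v :=
  inr_mem_image_inl_union.1 <| h.2.2 (Sum.inl a) (inl_mem_image_inl_union.2 ha) (Sum.inr a)
    (.single (.inr (.inr ⟨a, hneg, rfl, rfl⟩)))

lemma pos_mem_left (h : (CC A).Config (Sum.inl '' u ∪ Sum.inr '' v)) (ha : a ∈ v)
    (hpos : A.pol a = true) : a ∈ u :=
  inl_mem_image_inl_union.1 <| h.2.2 (Sum.inr a) (inr_mem_image_inl_union.2 ha) (Sum.inl a)
    (.single (.inr (.inl ⟨a, hpos, rfl, rfl⟩)))

lemma eq_or_pos_mem_of_le (h : (CC A).Config (Sum.inl '' u ∪ Sum.inr '' v))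
    (hmax : ∀ a' ∈ u, A.le a a' → a' = a) {c : A.Evt ⊕ A.Evt}
    (hle : ReflTransGen (ccGen A) (Sum.inl a) c) (hc : c ∈ Sum.inl '' u ∪ Sum.inr '' v) :
    c = Sum.inl a ∨ (A.pol a = true ∧ a ∈ v) := by
  induction hle with
  | refl => exact .inl rfl
  | @tail b c _ hbc ih =>
    rcases ih (h.2.2 c hc b (.single hbc)) with rfl | hgoal
    · rcases hbc with hpar | ⟨a', hpos, ha', rfl⟩ | ⟨_, _, ha', -⟩
      · rcases c with a' | a'
        · have ha' : a' ∈ u := by simpa using hc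
          exact .inl (by rw [hmax a' ha' hpar])
        · exact hpar.elim
      · cases ha'
        exact .inr ⟨hpos, by simpa using hc⟩
      · cases ha'
    · exact .inr hgoal

end CC

section Interaction

variable {S T : ES} {G : Set (S.Evt × T.Evt)} {p : S.Evt × T.Evt}

lemma forall_reflTransGen_gRel_eq_iff :
    (∀ q ∈ G, ReflTransGen (gRel S T G) p q → q = p) ↔ ∀ q, ¬ gRel S T G p q := by
  refine ⟨fun h q hpq => ?_, fun h q _ hpq => ?_⟩
  · have hqp := h q hpq.2.1 (.single hpq)
    subst hqp
    rcases hpq.2.2 with hlt | hlt <;> exact hlt.2 rfl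
  · rcases hpq.cases_head with rfl | ⟨r, hpr, -⟩
    · rfl
    · exact (h r hpr).elim

end Interaction

section CopycatInteraction

variable {A S : ESP} {σ : S.Evt → A.Evt} {x : Set S.Evt} {y : Set A.Evt}

lemma mem_ccGraph {p : (S.Evt ⊕ A.Evt) × (A.Evt ⊕ A.Evt)} :
    p ∈ ccGraph A S σ x y ↔
      (∃ s ∈ x, p = (Sum.inl s, Sum.inl (σ s))) ∨ ∃ a ∈ y, p = (Sum.inr a, Sum.inr a) := by
  obtain ⟨p₁, p₂⟩ := p
  simp only [ccGraph, Set.mem_union, Set.mem_image, Prod.mk.injEq]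
  constructor
  · rintro ⟨⟨s, hs, rfl⟩ | ⟨a, ha, rfl⟩, h⟩
    exacts [.inl ⟨s, hs, rfl, h⟩, .inr ⟨a, ha, rfl, h⟩]
  · rintro (⟨s, hs, rfl, rfl⟩ | ⟨a, ha, rfl, rfl⟩)
    exacts [⟨.inl ⟨s, hs, rfl⟩, rfl⟩, ⟨.inr ⟨a, ha, rfl⟩, rfl⟩]

lemma snd_mem_of_mem_ccGraph {p : (S.Evt ⊕ A.Evt) × (A.Evt ⊕ A.Evt)}
    (hp : p ∈ ccGraph A S σ x y) : p.2 ∈ Sum.inl '' (σ '' x) ∪ Sum.inr '' y := by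
  rcases mem_ccGraph.1 hp with ⟨s, hs, rfl⟩ | ⟨a, ha, rfl⟩
  exacts [inl_mem_image_inl_union.2 (Set.mem_image_of_mem σ hs), inr_mem_image_inl_union.2 ha]

lemma maxVis_ccGraph_iff :
    MaxVis A S σ (ccGraph A S σ x y) ↔ ∀ s ∈ x, ∃ q,
      gRel (S.toES.par A.toES) (CC A).toES (ccGraph A S σ x y) (Sum.inl s, Sum.inl (σ s)) q := by
  refine ⟨fun h s hs => ?_, fun h p hp hpmax => ?_⟩
  · by_contra! hmax
    obtain ⟨a, ha⟩ :=
      h _ (mem_ccGraph.2 (.inl ⟨s, hs, rfl⟩)) (forall_reflTransGen_gRel_eq_iff.2 hmax)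
    cases ha
  · rcases mem_ccGraph.1 hp with ⟨s, hs, rfl⟩ | ⟨a, -, rfl⟩
    · obtain ⟨q, hq⟩ := h s hs
      exact (forall_reflTransGen_gRel_eq_iff.1 hpmax q hq).elim
    · exact ⟨a, rfl⟩

lemma exists_gRel_ccGraph_inl_iff (hS : S.IsES) (hσ : IsPreStrategy S A σ)
    (hx : S.Config x) (hcc : (CC A).Config (Sum.inl '' (σ '' x) ∪ Sum.inr '' y))
    {s : S.Evt} (hs : s ∈ x) :
    (∃ q, gRel (S.toES.par A.toES) (CC A).toES (ccGraph A S σ x y)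
        (Sum.inl s, Sum.inl (σ s)) q) ↔
      ((∀ s' ∈ x, S.le s s' → s' = s) → S.pol s = true ∧ σ s ∈ y) := by
  have hp : (Sum.inl s, Sum.inl (σ s)) ∈ ccGraph A S σ x y := mem_ccGraph.2 (.inl ⟨s, hs, rfl⟩)
  constructor
  · rintro ⟨q, -, hq, hlt | hlt⟩ hmax
    · rcases mem_ccGraph.1 hq with ⟨s', hs', rfl⟩ | ⟨a, -, rfl⟩
      · exact (hlt.2 (congrArg Sum.inl (hmax s' hs' hlt.1)).symm).elim
      · exact hlt.1.elim
    · rcases CC.eq_or_pos_mem_of_le hcc (hσ.1.map_maximal hS hx hs hmax) hlt.1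
        (snd_mem_of_mem_ccGraph hq) with heq | ⟨hpos, hy⟩
      · exact (hlt.2 heq.symm).elim
      · exact ⟨hσ.2 s ▸ hpos, hy⟩
  · intro h
    by_cases hmax : ∀ s' ∈ x, S.le s s' → s' = s
    · obtain ⟨hpos, hsy⟩ := h hmax
      refine ⟨(Sum.inr (σ s), Sum.inr (σ s)), hp, mem_ccGraph.2 (.inr ⟨σ s, hsy, rfl⟩), .inr ?_⟩
      exact ⟨.single (.inr (.inl ⟨σ s, (hσ.2 s).trans hpos, rfl, rfl⟩)), Sum.inl_ne_inr⟩
    · push Not at hmax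
      obtain ⟨s', hs', hss', hne⟩ := hmax
      refine ⟨(Sum.inl s', Sum.inl (σ s')), hp, mem_ccGraph.2 (.inl ⟨s', hs', rfl⟩), .inl ?_⟩
      exact ⟨hss', fun h => hne (Sum.inl.inj h).symm⟩

end CopycatInteraction

lemma Courteous.image_subset {A S : ESP} {σ : S.Evt → A.Evt} {x : Set S.Evt} {y : Set A.Evt}
    (hσ : Courteous S A σ) (hS : S.IsES) (hx : S.Config x) (hy : A.Config y)
    (hneg : ∀ s ∈ x, S.pol s = false → σ s ∈ y)
    (hmax : ∀ s ∈ x, (∀ s' ∈ x, S.le s s' → s' = s) → σ s ∈ y) : σ '' x ⊆ y := by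
  rintro _ ⟨s₀, hs₀, rfl⟩
  by_contra hs₀y
  let := hS.partialOrder
  obtain ⟨s, ⟨hs, hsy⟩, hsmax⟩ :=
    (hx.1.subset fun _ hu => hu.1 : {s ∈ x | σ s ∉ y}.Finite).exists_maximal ⟨s₀, hs₀, hs₀y⟩
  have hpos : S.pol s = true := by
    by_contra hpos
    exact hsy (hneg s hs (by simpa using hpos))
  obtain ⟨t, ht, hst, hts⟩ : ∃ t ∈ x, S.le s t ∧ t ≠ s := by
    by_contra! h
    exact hsy (hmax s hs h)
  obtain ⟨v, hv, hsv⟩ := ES.exists_imc_of_lt hS hx ht ⟨hst, hts.symm⟩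
  have hvy : σ v ∈ y := by
    by_contra hvy
    exact hsv.1.2 (Maximal.eq_of_le ⟨⟨hs, hsy⟩, hsmax⟩ ⟨hv, hvy⟩ hsv.1.1)
  exact hsy (hy.2.2 _ hvy _ (hσ s v hsv (by simp [hpos])).1.1)

theorem interaction_witness_maximal_events_general
    (A S : ESP) (hS : S.toES.IsES)
    (σ : S.Evt → A.Evt) (hσ : IsPreStrategy S A σ)
    (x : Set S.Evt) (y : Set A.Evt)
    (hx : S.toES.Config x) (hy : A.toES.Config y)
    (hcc : (CC A).toES.Config (Sum.inl '' (σ '' x) ∪ Sum.inr '' y)) :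
    (MaxVis A S σ (ccGraph A S σ x y) ↔
      ∀ s ∈ x, (∀ s' ∈ x, S.le s s' → s' = s) → S.pol s = true ∧ σ s ∈ y) ∧
    (MaxVis A S σ (ccGraph A S σ x y) → Courteous S A σ →
      polExt A.pol false (σ '' x) y) := by
  have hvis : MaxVis A S σ (ccGraph A S σ x y) ↔
      ∀ s ∈ x, (∀ s' ∈ x, S.le s s' → s' = s) → S.pol s = true ∧ σ s ∈ y := by
    rw [maxVis_ccGraph_iff]
    exact forall₂_congr fun s hs => exists_gRel_ccGraph_inl_iff hS hσ hx hcc hs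
  refine ⟨hvis, fun hmv hcourt => ⟨?_, fun a ha hna => ?_⟩⟩
  · refine hcourt.image_subset hS hx hy (fun s hs hneg => ?_)
      fun s hs hmax => (hvis.1 hmv s hs hmax).2
    exact CC.neg_mem_right hcc (Set.mem_image_of_mem σ hs) ((hσ.2 s).trans hneg)
  · by_contra hpos
    exact hna (CC.pos_mem_left hcc ha (by simpa using hpos))

/-- for a secured bijection `φ : x ∥ y ≃ σ x ∥ y` corresponding
to a configuration of `CC_A ⊛ S`, all maximal events of `φ` are visible iff
every maximal event `s` of `x` is positive with `σ s ∈ y`; and in this case,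
if `σ` is courteous, `σ x ⊆⁻ y`. -/
theorem interaction_witness_maximal_events
    (A S : ESP) (hA : A.toES.IsES) (hS : S.toES.IsES)
    (σ : S.Evt → A.Evt) (hσ : IsPreStrategy S A σ)
    (x : Set S.Evt) (y : Set A.Evt)
    (hx : S.toES.Config x) (hy : A.toES.Config y)
    (hcc : (CC A).toES.Config (Sum.inl '' (σ '' x) ∪ Sum.inr '' y)) :
    (MaxVis A S σ (ccGraph A S σ x y) ↔
      ∀ s ∈ x, (∀ s' ∈ x, S.le s s' → s' = s) → S.pol s = true ∧ σ s ∈ y) ∧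
    (MaxVis A S σ (ccGraph A S σ x y) → Courteous S A σ →
      polExt A.pol false (σ '' x) y) :=
  interaction_witness_maximal_events_general A S hS σ hσ x y hx hy hcc
end
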